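/- arXiv:2602.21115 — 5 statements merged into one kernel-verified Lean document; each statement's English description precedes it below -/
import Mathlib

section
/- Let n ≥ 2 and let u : (0,1] → ℝ be a C² radial solution of -u''(r) - (n-1)/r · u'(r) = f(u(r)) on (0,1) with u(1) = 0, 0 ≤ u ≤ 1, where f : [0,1) → [0,∞) is C¹ and nondecreasing. Then |u'(t)| ≥ t |u'(1)| for all t ∈ (0,1]. -/
/-!
With the flux `G r = -r^(n-1) u'(r)` the equation reads `G' = r^(n-1) f(u)`, so `G` is
nondecreasing. Since `u` is bounded this forces `u' ≤ 0`: otherwise `u'(s) ≥ c / s` near `0`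
and `u` would diverge logarithmically. Hence `f ∘ u` is nonincreasing, which in the variable
`t = r^n` says that `Ψ(t) = n G(t^(1/n))` is concave. As `Ψ ≥ 0`, the ratio `Ψ(t) / t`, which
is `-u'(r) / r`, is nonincreasing; comparing it at `r` and, in the limit, at `1` gives the claim.
-/

open Set Filter Topology Real

theorem sub_le_sub_of_hasDerivAt_of_le {f g f' g' : ℝ → ℝ} {a b : ℝ} (hab : a ≤ b)
    (hf : ∀ x ∈ Icc a b, HasDerivAt f (f' x) x) (hg : ∀ x ∈ Icc a b, HasDerivAt g (g' x) x)
    (hle : ∀ x ∈ Ioo a b, f' x ≤ g' x) : f b - f a ≤ g b - g a := by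
  have hd : ∀ x ∈ Icc a b, HasDerivAt (fun x => g x - f x) (g' x - f' x) x :=
    fun x hx => (hg x hx).sub (hf x hx)
  have hmono : MonotoneOn (fun x => g x - f x) (Icc a b) := by
    refine monotoneOn_of_hasDerivWithinAt_nonneg (f' := fun x => g' x - f' x) (convex_Icc a b)
      (fun x hx => (hd x hx).continuousAt.continuousWithinAt) (fun x hx => ?_) (fun x hx => ?_)
    · exact (hd x (interior_subset hx)).hasDerivWithinAt
    · rw [interior_Icc] at hx
      exact sub_nonneg.2 (hle x hx)
  linarith [hmono (left_mem_Icc.2 hab) (right_mem_Icc.2 hab) hab]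

theorem IsLocalMax.deriv_deriv_nonpos {f : ℝ → ℝ} {x : ℝ} (h : IsLocalMax f x)
    (hc : ContinuousAt f x) : deriv (deriv f) x ≤ 0 := by
  by_contra! hpos
  have hmin := isLocalMin_of_deriv_deriv_pos hpos h.deriv_eq_zero hc
  have hconst : f =ᶠ[𝓝 x] fun _ => f x := by
    filter_upwards [h, hmin] with y hmax hmin using le_antisymm hmax hmin
  have : deriv (deriv f) x = 0 := by
    rw [hconst.deriv.deriv_eq]
    simp
  exact hpos.ne' this

theorem not_bddBelow_of_div_le_deriv {u : ℝ → ℝ} {c s₀ : ℝ} (hc : 0 < c) (hs₀ : 0 < s₀)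
    (hu : ∀ s ∈ Ioc 0 s₀, DifferentiableAt ℝ u s) (hle : ∀ s ∈ Ioc 0 s₀, c / s ≤ deriv u s) :
    ¬ BddBelow (u '' Ioc 0 s₀) := by
  rintro ⟨m, hm⟩
  have hm₀ : m ≤ u s₀ := hm ⟨s₀, right_mem_Ioc.2 hs₀, rfl⟩
  set ε := s₀ * exp (-((u s₀ - m + 1) / c))
  have hε₀ : 0 < ε := by positivity
  have hεs₀ : ε ≤ s₀ :=
    mul_le_of_le_one_right hs₀.le (exp_le_one_iff.2 (neg_nonpos.2 (by positivity)))
  have hlog : c * log s₀ - c * log ε ≤ u s₀ - u ε :=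
    sub_le_sub_of_hasDerivAt_of_le hεs₀
      (fun x hx => (hasDerivAt_log (hε₀.trans_le hx.1).ne').const_mul c)
      (fun x hx => (hu x ⟨hε₀.trans_le hx.1, hx.2⟩).hasDerivAt)
      (fun x hx => by simpa [div_eq_mul_inv] using hle x ⟨hε₀.trans hx.1, hx.2.le⟩)
  have hlogε : c * log s₀ - c * log ε = u s₀ - m + 1 := by
    rw [log_mul hs₀.ne' (exp_pos _).ne', log_exp]
    field_simp
    ring
  have : m ≤ u ε := hm ⟨ε, ⟨hε₀, hεs₀⟩, rfl⟩
  linarith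

theorem MonotoneOn.comp_antitoneOn_of_continuousOn {f u : ℝ → ℝ} {s : Set ℝ} {a b : ℝ}
    (hf : MonotoneOn f (Ico a b)) (hu : AntitoneOn u s) (hs : s.OrdConnected)
    (hus : ∀ r ∈ s, u r ∈ Icc a b) (huc : ContinuousOn u s) (hfuc : ContinuousOn (f ∘ u) s) :
    AntitoneOn (f ∘ u) s := by
  intro x hx y hy hxy
  have hIcc : Icc x y ⊆ s := hs.out hx hy
  rcases (hus x hx).2.lt_or_eq with hxb | hxb
  · exact hf ⟨(hus y hy).1, (hu hx hy hxy).trans_lt hxb⟩ ⟨(hus x hx).1, hxb⟩ (hu hx hy hxy)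
  rcases (hus y hy).2.lt_or_eq with hyb | hyb
  swap
  · simp [Function.comp, hxb, hyb]
  -- `c` is the last point of `[x, y]` where `u` still takes the value `b`
  set S := Icc x y ∩ u ⁻¹' {b}
  have hS : IsClosed S :=
    (huc.mono hIcc).preimage_isClosed_of_isClosed isClosed_Icc isClosed_singleton
  have hxS : x ∈ S := ⟨left_mem_Icc.2 hxy, hxb⟩
  set c := sSup S
  have hcS : c ∈ S := hS.csSup_mem ⟨x, hxS⟩ ⟨y, fun r hr => hr.1.2⟩
  have hcy : c < y := lt_of_le_of_ne hcS.1.2 fun h => hyb.ne (h ▸ hcS.2)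
  have hlim : Tendsto (f ∘ u) (𝓝[>] c) (𝓝 ((f ∘ u) c)) := by
    rw [← nhdsWithin_Ioo_eq_nhdsGT hcy]
    exact (hfuc c (hIcc hcS.1)).mono fun r hr => hIcc ⟨hcS.1.1.trans hr.1.le, hr.2.le⟩
  rw [show (f ∘ u) x = (f ∘ u) c by simp [Function.comp, hxb, hcS.2.symm]]
  refine ge_of_tendsto hlim ?_
  filter_upwards [Ioo_mem_nhdsGT hcy] with r hr
  have hrs : r ∈ s := hIcc ⟨hcS.1.1.trans hr.1.le, hr.2.le⟩
  have hrb : u r < b := lt_of_le_of_ne (hus r hrs).2 fun h =>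
    hr.1.not_ge (le_csSup ⟨y, fun r hr => hr.1.2⟩ ⟨⟨hcS.1.1.trans hr.1.le, hr.2.le⟩, h⟩)
  exact hf ⟨(hus y hy).1, (hu hrs hy hr.2.le).trans_lt hrb⟩ ⟨(hus r hrs).1, hrb⟩
    (hu hrs hy hr.2.le)

theorem antitoneOn_div_pow_of_hasDerivAt {G h : ℝ → ℝ} {b : ℝ} {n : ℕ} (hn : 1 ≤ n)
    (hG : ∀ r ∈ Ioo 0 b, HasDerivAt G (r ^ (n - 1) * h r) r) (hh : AntitoneOn h (Ioo 0 b))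
    (hG₀ : ∀ r ∈ Ioo 0 b, 0 ≤ G r) : AntitoneOn (fun r => G r / r ^ n) (Ioo 0 b) := by
  have hpow : ∀ c r : ℝ, HasDerivAt (fun x => c * x ^ n / n) (r ^ (n - 1) * c) r := fun c r => by
    refine (((hasDerivAt_pow n r).const_mul c).div_const (n : ℝ)).congr_deriv ?_
    field_simp
  intro t ht y hy hty
  have hsub : ∀ {p q}, p ∈ Ioo 0 b → q ∈ Ioo 0 b → Icc p q ⊆ Ioo 0 b := fun hp hq r hr =>
    ⟨hp.1.trans_le hr.1, hr.2.trans_lt hq.2⟩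
  -- the derivative of `h t * r ^ n / n` bounds `G'` from below left of `t`, from above right of it
  have hbelow : h t * t ^ n / n ≤ G t := by
    have hε : ∀ ε ∈ Ioo 0 t, h t * t ^ n / n - h t * ε ^ n / n ≤ G t := fun ε hε => by
      have hεb : ε ∈ Ioo 0 b := ⟨hε.1, hε.2.trans ht.2⟩
      have := sub_le_sub_of_hasDerivAt_of_le hε.2.le (fun r _ => hpow (h t) r)
        (fun r hr => hG r (hsub hεb ht hr)) fun r hr => mul_le_mul_of_nonneg_left
          (hh (hsub hεb ht (Ioo_subset_Icc_self hr)) ht hr.2.le) (pow_nonneg (hε.1.trans hr.1).le _)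
      linarith [hG₀ ε hεb]
    have hlim : Tendsto (fun ε : ℝ => h t * t ^ n / n - h t * ε ^ n / n) (𝓝[>] 0)
        (𝓝 (h t * t ^ n / n)) := by
      have : Continuous fun ε : ℝ => h t * t ^ n / n - h t * ε ^ n / n := by fun_prop
      simpa [zero_pow (by omega : n ≠ 0)] using (this.tendsto 0).mono_left nhdsWithin_le_nhds
    exact le_of_tendsto hlim (eventually_of_mem (Ioo_mem_nhdsGT ht.1) hε)
  have habove : G y - G t ≤ h t * y ^ n / n - h t * t ^ n / n :=
    sub_le_sub_of_hasDerivAt_of_le hty (fun r hr => hG r (hsub ht hy hr)) (fun r _ => hpow (h t) r)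
      fun r hr => mul_le_mul_of_nonneg_left (hh ht (hsub ht hy (Ioo_subset_Icc_self hr)) hr.1.le)
        (pow_nonneg (ht.1.trans hr.1).le _)
  have htn : 0 < t ^ n := pow_pos ht.1 n
  have hyn : t ^ n ≤ y ^ n := pow_le_pow_left₀ ht.1.le hty n
  rw [div_le_div_iff₀ (pow_pos hy.1 n) htn]
  linear_combination mul_le_mul_of_nonneg_right hbelow (sub_nonneg.2 hyn) +
    mul_le_mul_of_nonneg_right habove htn.le

theorem tendsto_deriv_nhdsLT_of_contDiffOn {u : ℝ → ℝ} {a b : ℝ} (hab : a < b)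
    (hu : ContDiffOn ℝ 1 u (Ioc a b)) (hb : DifferentiableAt ℝ u b) :
    Tendsto (deriv u) (𝓝[<] b) (𝓝 (deriv u b)) := by
  have hcont := hu.continuousOn_derivWithin (uniqueDiffOn_Ioc a b) le_rfl b (right_mem_Ioc.2 hab)
  rw [ContinuousWithinAt, hb.derivWithin (uniqueDiffOn_Ioc a b b (right_mem_Ioc.2 hab))] at hcont
  rw [← nhdsWithin_Ioo_eq_nhdsLT hab]
  refine (hcont.mono_left (nhdsWithin_mono _ Ioo_subset_Ioc_self)).congr' ?_
  filter_upwards [self_mem_nhdsWithin] with x hx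
  exact derivWithin_of_mem_nhds (mem_of_superset (isOpen_Ioo.mem_nhds hx) Ioo_subset_Ioc_self)

noncomputable def radialFlux (n : ℕ) (u : ℝ → ℝ) (r : ℝ) : ℝ := -(r ^ (n - 1) * deriv u r)

theorem hasDerivAt_radialFlux {n : ℕ} {u : ℝ → ℝ} {r : ℝ} (hn : 1 ≤ n) (hr : r ≠ 0)
    (hu : DifferentiableAt ℝ (deriv u) r) :
    HasDerivAt (radialFlux n u)
      (r ^ (n - 1) * (-deriv (deriv u) r - ((n : ℝ) - 1) / r * deriv u r)) r := by
  refine (((hasDerivAt_pow (n - 1) r).mul hu.hasDerivAt).neg).congr_deriv ?_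
  obtain ⟨k, rfl⟩ := Nat.exists_eq_add_of_le hn
  rcases k with _ | k
  · simp
  · simp only [Nat.add_sub_cancel_left, pow_succ, Nat.cast_add, Nat.cast_one, Nat.add_sub_cancel]
    field_simp
    ring

theorem radialFlux_div_pow {n : ℕ} {u : ℝ → ℝ} {r : ℝ} (hn : 1 ≤ n) (hr : r ≠ 0) :
    radialFlux n u r / r ^ n = -deriv u r / r := by
  obtain ⟨k, rfl⟩ := Nat.exists_eq_add_of_le hn
  rw [radialFlux, Nat.add_sub_cancel_left, pow_add]
  field_simp

theorem deriv_nonpos_of_monotoneOn_radialFlux {n : ℕ} {u : ℝ → ℝ} (hn : 2 ≤ n)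
    (hu : ∀ r ∈ Ioo 0 1, DifferentiableAt ℝ u r) (hbdd : BddBelow (u '' Ioo 0 1))
    (hG : MonotoneOn (radialFlux n u) (Ioo 0 1)) {r : ℝ} (hr : r ∈ Ioo 0 1) :
    deriv u r ≤ 0 := by
  by_contra! hpos
  have hsub : Ioc 0 r ⊆ Ioo 0 1 := fun s hs => ⟨hs.1, hs.2.trans_lt hr.2⟩
  refine not_bddBelow_of_div_le_deriv (mul_pos (pow_pos hr.1 (n - 1)) hpos) hr.1
    (fun s hs => hu s (hsub hs)) (fun s hs => ?_) (hbdd.mono (image_mono hsub))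
  have hflux : r ^ (n - 1) * deriv u r ≤ s ^ (n - 1) * deriv u s :=
    neg_le_neg_iff.1 (hG (hsub hs) hr hs.2)
  have hs1 : s ^ (n - 1) ≤ s := pow_le_of_le_one hs.1.le (hs.2.trans hr.2.le) (by omega)
  have hus : 0 < deriv u s := pos_of_mul_pos_right
    ((mul_pos (pow_pos hr.1 (n - 1)) hpos).trans_le hflux) (pow_pos hs.1 (n - 1)).le
  rw [div_le_iff₀ hs.1]
  nlinarith

section RadialSolution

variable {n : ℕ} {u f : ℝ → ℝ}

theorem comp_nonneg_of_radial (hu : ContDiffOn ℝ 2 u (Ioo 0 1))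
    (hub : ∀ r ∈ Ioo (0:ℝ) 1, 0 ≤ u r ∧ u r ≤ 1) (hfpos : ∀ t ∈ Ico (0:ℝ) 1, 0 ≤ f t)
    (heq : ∀ r ∈ Ioo (0:ℝ) 1, -(deriv (deriv u) r) - ((n:ℝ) - 1) / r * deriv u r = f (u r))
    {r : ℝ} (hr : r ∈ Ioo 0 1) : 0 ≤ f (u r) := by
  rcases (hub r hr).2.lt_or_eq with hlt | hr1
  · exact hfpos _ ⟨(hub r hr).1, hlt⟩
  have hmax : IsLocalMax u r := by
    filter_upwards [isOpen_Ioo.mem_nhds hr] with y hy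
    exact hr1 ▸ (hub y hy).2
  rw [← heq r hr, hmax.deriv_eq_zero, mul_zero, sub_zero, neg_nonneg]
  exact hmax.deriv_deriv_nonpos (hu.continuousOn.continuousAt (isOpen_Ioo.mem_nhds hr))

theorem hasDerivAt_radialFlux_of_radial (hn : 1 ≤ n) (hu : ContDiffOn ℝ 2 u (Ioo 0 1))
    (heq : ∀ r ∈ Ioo (0:ℝ) 1, -(deriv (deriv u) r) - ((n:ℝ) - 1) / r * deriv u r = f (u r))
    {r : ℝ} (hr : r ∈ Ioo 0 1) : HasDerivAt (radialFlux n u) (r ^ (n - 1) * f (u r)) r :=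
  heq r hr ▸ hasDerivAt_radialFlux hn hr.1.ne'
    ((hu.deriv_of_isOpen isOpen_Ioo (m := 1) (by norm_num)).differentiableOn one_ne_zero
      |>.differentiableAt (isOpen_Ioo.mem_nhds hr))

theorem deriv_nonpos_of_radial (hn : 2 ≤ n) (hu : ContDiffOn ℝ 2 u (Ioo 0 1))
    (hub : ∀ r ∈ Ioo (0:ℝ) 1, 0 ≤ u r ∧ u r ≤ 1) (hfpos : ∀ t ∈ Ico (0:ℝ) 1, 0 ≤ f t)
    (heq : ∀ r ∈ Ioo (0:ℝ) 1, -(deriv (deriv u) r) - ((n:ℝ) - 1) / r * deriv u r = f (u r))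
    {r : ℝ} (hr : r ∈ Ioo 0 1) : deriv u r ≤ 0 := by
  have hd := fun r (hr : r ∈ Ioo (0:ℝ) 1) => hasDerivAt_radialFlux_of_radial (by omega) hu heq hr
  have hmono : MonotoneOn (radialFlux n u) (Ioo 0 1) := by
    refine monotoneOn_of_hasDerivWithinAt_nonneg (f' := fun r => r ^ (n - 1) * f (u r))
      (convex_Ioo 0 1) (fun r hr => (hd r hr).continuousAt.continuousWithinAt) (fun r hr => ?_)
      (fun r hr => ?_)
    all_goals rw [interior_Ioo] at hr
    · exact (hd r hr).hasDerivWithinAt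
    · exact mul_nonneg (pow_nonneg hr.1.le _) (comp_nonneg_of_radial hu hub hfpos heq hr)
  exact deriv_nonpos_of_monotoneOn_radialFlux hn
    (fun r hr => (hu.differentiableOn (by norm_num)).differentiableAt (isOpen_Ioo.mem_nhds hr))
    ⟨0, by rintro _ ⟨s, hs, rfl⟩; exact (hub s hs).1⟩ hmono hr

theorem antitoneOn_neg_deriv_div_of_radial (hn : 2 ≤ n) (hu : ContDiffOn ℝ 2 u (Ioo 0 1))
    (hub : ∀ r ∈ Ioo (0:ℝ) 1, 0 ≤ u r ∧ u r ≤ 1) (hfpos : ∀ t ∈ Ico (0:ℝ) 1, 0 ≤ f t)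
    (hfmono : MonotoneOn f (Ico 0 1))
    (heq : ∀ r ∈ Ioo (0:ℝ) 1, -(deriv (deriv u) r) - ((n:ℝ) - 1) / r * deriv u r = f (u r)) :
    AntitoneOn (fun r => -deriv u r / r) (Ioo 0 1) := by
  have hu' : ContinuousOn (deriv u) (Ioo 0 1) :=
    hu.continuousOn_deriv_of_isOpen isOpen_Ioo (by norm_num)
  have hu'' : ContinuousOn (deriv (deriv u)) (Ioo 0 1) :=
    (hu.deriv_of_isOpen isOpen_Ioo (m := 1) (by norm_num)).continuousOn_deriv_of_isOpen
      isOpen_Ioo le_rfl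
  have hanti : AntitoneOn u (Ioo 0 1) := by
    refine antitoneOn_of_deriv_nonpos (convex_Ioo 0 1) hu.continuousOn
      (hu.differentiableOn (by norm_num) |>.mono interior_subset) fun r hr => ?_
    rw [interior_Ioo] at hr
    exact deriv_nonpos_of_radial hn hu hub hfpos heq hr
  -- `f ∘ u` inherits continuity from the left-hand side of the equation, also where `u = 1`
  have hcont : ContinuousOn (f ∘ u) (Ioo 0 1) :=
    (hu''.neg.sub ((continuousOn_const.div continuousOn_id fun r hr => hr.1.ne').mul hu')).congr
      fun r hr => (heq r hr).symm
  have hfu : AntitoneOn (f ∘ u) (Ioo 0 1) :=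
    hfmono.comp_antitoneOn_of_continuousOn hanti ordConnected_Ioo hub hu.continuousOn hcont
  refine (antitoneOn_div_pow_of_hasDerivAt (by omega)
    (fun r hr => hasDerivAt_radialFlux_of_radial (by omega) hu heq hr) hfu fun r hr => ?_).congr
    fun r hr => radialFlux_div_pow (by omega) hr.1.ne'
  exact neg_nonneg.2 (mul_nonpos_of_nonneg_of_nonpos (pow_nonneg hr.1.le _)
    (deriv_nonpos_of_radial hn hu hub hfpos heq hr))

end RadialSolution

theorem stmt_10_general (n : ℕ) (hn : 2 ≤ n) (u f : ℝ → ℝ)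
    (hu : ContDiffOn ℝ 2 u (Set.Ioc 0 1))
    (hub : ∀ r ∈ Set.Ioc (0:ℝ) 1, 0 ≤ u r ∧ u r ≤ 1)
    (hfpos : ∀ t ∈ Set.Ico (0:ℝ) 1, 0 ≤ f t)
    (hfmono : MonotoneOn f (Set.Ico 0 1))
    (heq : ∀ r ∈ Set.Ioo (0:ℝ) 1,
      -(deriv (deriv u) r) - ((n:ℝ) - 1) / r * deriv u r = f (u r)) :
    ∀ t ∈ Set.Ioc (0:ℝ) 1, t * |deriv u 1| ≤ |deriv u t| := by
  intro t ht
  by_cases hd1 : DifferentiableAt ℝ u 1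
  swap
  · simp [deriv_zero_of_not_differentiableAt hd1]
  rcases ht.2.eq_or_lt with rfl | ht1
  · simp
  have hu₀ := hu.mono Ioo_subset_Ioc_self
  have hub₀ := fun r (hr : r ∈ Ioo (0:ℝ) 1) => hub r (Ioo_subset_Ioc_self hr)
  have hneg := fun r (hr : r ∈ Ioo (0:ℝ) 1) => deriv_nonpos_of_radial hn hu₀ hub₀ hfpos heq hr
  have hlim := tendsto_deriv_nhdsLT_of_contDiffOn one_pos (hu.of_le (by norm_num)) hd1
  have hlt1 : ∀ᶠ y in 𝓝[<] (1:ℝ), y ∈ Ioo t 1 := Ioo_mem_nhdsLT ht1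
  have hd1_nonpos : deriv u 1 ≤ 0 :=
    le_of_tendsto hlim (hlt1.mono fun y hy => hneg y ⟨ht.1.trans hy.1, hy.2⟩)
  have hcmp : t * -deriv u 1 ≤ 1 * -deriv u t := by
    refine le_of_tendsto_of_tendsto (hlim.neg.const_mul t)
      ((continuous_id.mul continuous_const).continuousAt.tendsto.mono_left nhdsWithin_le_nhds)
      (hlt1.mono fun y hy => ?_)
    have := antitoneOn_neg_deriv_div_of_radial hn hu₀ hub₀ hfpos hfmono heq ⟨ht.1, ht1⟩
      ⟨ht.1.trans hy.1, hy.2⟩ hy.1.le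
    rw [div_le_div_iff₀ (ht.1.trans hy.1) ht.1] at this
    simpa [mul_comm] using this
  rw [abs_of_nonpos hd1_nonpos, abs_of_nonpos (hneg t ⟨ht.1, ht1⟩)]
  linarith

/-- For a C² radial solution `u` of `-u'' - (n-1)/r u' = f(u)` on
`(0,1)` with `u(1)=0`, `0 ≤ u ≤ 1` and `f ≥ 0` C¹ nondecreasing, one has
`|u'(t)| ≥ t|u'(1)|` for all `t ∈ (0,1]`. -/
theorem stmt_10 (n : ℕ) (hn : 2 ≤ n) (u f : ℝ → ℝ)
    (hu : ContDiffOn ℝ 2 u (Set.Ioc 0 1)) (hu1 : u 1 = 0)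
    (hub : ∀ r ∈ Set.Ioc (0:ℝ) 1, 0 ≤ u r ∧ u r ≤ 1)
    (hf : ContDiffOn ℝ 1 f (Set.Ico 0 1))
    (hfpos : ∀ t ∈ Set.Ico (0:ℝ) 1, 0 ≤ f t)
    (hfmono : MonotoneOn f (Set.Ico 0 1))
    (heq : ∀ r ∈ Set.Ioo (0:ℝ) 1,
      -(deriv (deriv u) r) - ((n:ℝ) - 1) / r * deriv u r = f (u r)) :
    ∀ t ∈ Set.Ioc (0:ℝ) 1, t * |deriv u 1| ≤ |deriv u t| :=
  stmt_10_general n hn u f hu hub hfpos hfmono heq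
end

section
/- Let n ≥ 2 and let u : (0,1] → ℝ be a C² radial solution of -u''(r) - (n-1)/r · u'(r) = f(u(r)) on (0,1) with u(1) = 0, 0 ≤ u ≤ 1, where f : [0,1) → [0,∞) is C¹ and nondecreasing. Then |u'(1)| ≤ 2. -/
/-!
Put `g(r) = r^(n-1) u'(r)`, so that the equation reads `g' = -r^(n-1) f(u)`. As `f ≥ 0`, `g` is
nonincreasing, and it is nonpositive: otherwise `u' ≥ c/r` near `0` and `u` would be unbounded
(this is where `n ≥ 2` enters). So `u` is nonincreasing, hence so is `r ↦ f(u(r))`; this says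
that `Ψ(t) = -n g(t^(1/n))` is concave. Comparing `Ψ` with its chord on `[0, 1]` gives
`u'(s) ≤ s u'(1)`, and integrating, `1 ≥ u(0⁺) - u(1) ≥ |u'(1)| / 2`.
-/

open Set Filter Topology

theorem antitoneOn_of_eq_comp_of_eq_zero {I : Set ℝ} [I.OrdConnected] {u f ρ : ℝ → ℝ}
    (hu : AntitoneOn u I) (hu01 : ∀ x ∈ I, 0 ≤ u x ∧ u x ≤ 1) (hf : MonotoneOn f (Ico 0 1))
    (hρ : ContinuousOn ρ I) (hρf : ∀ x ∈ I, u x < 1 → ρ x = f (u x))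
    (hρ1 : ∀ x ∈ I, u x = 1 → ρ x = 0) : AntitoneOn ρ I := by
  intro r hr s hs hrs
  by_contra! hlt
  have hIcc : Icc r s ⊆ I := I.Icc_subset hr hs
  obtain ⟨x, hx, hρx⟩ := intermediate_value_Icc hrs (hρ.mono hIcc)
    (show (ρ r + ρ s) / 2 ∈ Icc (ρ r) (ρ s) by constructor <;> linarith)
  have hxI := hIcc hx
  rcases (hu01 x hxI).2.lt_or_eq with hx1 | hx1
  · have hsx : u s ≤ u x := hu hxI hs hx.2
    have hs1 : u s < 1 := hsx.trans_lt hx1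
    have := hf ⟨(hu01 s hs).1, hs1⟩ ⟨(hu01 x hxI).1, hx1⟩ hsx
    rw [← hρf s hs hs1, ← hρf x hxI hx1] at this
    linarith
  · have hr1 : u r = 1 := le_antisymm (hu01 r hr).2 (hx1 ▸ hu hr hxI hx.1)
    linarith [hρ1 x hxI hx1, hρ1 r hr hr1]

theorem mul_log_le_sub_of_div_le_deriv {u u' : ℝ → ℝ} {c ε s : ℝ} (hε : 0 < ε) (hεs : ε ≤ s)
    (hu : ContinuousOn u (Icc ε s)) (hu' : ∀ x ∈ Ioo ε s, HasDerivAt u (u' x) x)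
    (hc : ∀ x ∈ Ioo ε s, c / x ≤ u' x) : c * Real.log (s / ε) ≤ u s - u ε := by
  have hw : MonotoneOn (fun x => u x - c * Real.log x) (Icc ε s) := by
    refine monotoneOn_of_hasDerivWithinAt_nonneg (convex_Icc ε s) (f' := fun x => u' x - c * x⁻¹)
      (hu.sub (continuousOn_const.mul (Real.continuousOn_log.mono
        fun x hx => (hε.trans_le hx.1).ne'))) ?_ ?_ <;> rw [interior_Icc] <;> intro x hx
    · exact ((hu' x hx).sub
        ((Real.hasDerivAt_log (hε.trans hx.1).ne').const_mul c)).hasDerivWithinAt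
    · simpa [div_eq_mul_inv] using hc x hx
  have := hw (left_mem_Icc.2 hεs) (right_mem_Icc.2 hεs) hεs
  rw [Real.log_div (hε.trans_le hεs).ne' hε.ne']
  linarith

theorem pow_mul_nonpos_of_antitoneOn {u u' : ℝ → ℝ} {m : ℕ} (hm : 1 ≤ m)
    (hu' : ∀ x ∈ Ioo 0 1, HasDerivAt u (u' x) x) (hu01 : ∀ x ∈ Ioo 0 1, 0 ≤ u x ∧ u x ≤ 1)
    (hanti : AntitoneOn (fun x => x ^ m * u' x) (Ioo 0 1)) {s : ℝ} (hs : s ∈ Ioo 0 1) :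
    s ^ m * u' s ≤ 0 := by
  by_contra! hc
  set c := s ^ m * u' s
  -- chosen so that `c * log (s / ε) = 2` exceeds the oscillation of `u`
  set ε := s / Real.exp (2 / c)
  have hε : 0 < ε := div_pos hs.1 (Real.exp_pos _)
  have hεs : ε < s := div_lt_self hs.1 (Real.one_lt_exp_iff.2 (by positivity))
  have hsub : Icc ε s ⊆ Ioo 0 1 := fun x hx => ⟨hε.trans_le hx.1, hx.2.trans_lt hs.2⟩
  have hbound : ∀ x ∈ Ioo ε s, c / x ≤ u' x := by
    intro x hx
    have hx0 : 0 < x := hε.trans hx.1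
    have hcx : c ≤ x ^ m * u' x := hanti (hsub (Ioo_subset_Icc_self hx)) hs hx.2.le
    calc c / x ≤ c / x ^ m :=
          div_le_div_of_nonneg_left hc.le (pow_pos hx0 m)
            (pow_le_of_le_one hx0.le (hx.2.trans hs.2).le (by omega))
      _ ≤ u' x := by rwa [div_le_iff₀ (pow_pos hx0 m), mul_comm]
  have hlog := mul_log_le_sub_of_div_le_deriv hε hεs.le
    (fun x hx => (hu' x (hsub hx)).continuousAt.continuousWithinAt)
    (fun x hx => hu' x (hsub (Ioo_subset_Icc_self hx))) hbound
  rw [div_div_cancel₀ hs.1.ne', Real.log_exp, mul_div_cancel₀ _ hc.ne'] at hlog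
  linarith [hu01 s hs, hu01 ε (hsub (left_mem_Icc.2 hεs.le))]

theorem le_mul_pow_succ_of_hasDerivAt {g ρ : ℝ → ℝ} {m : ℕ} (hg : ContinuousOn g (Ioc 0 1))
    (hg' : ∀ r ∈ Ioo 0 1, HasDerivAt g (-(r ^ m * ρ r)) r) (hρ : AntitoneOn ρ (Ioo 0 1))
    (hg0 : ∀ r ∈ Ioo 0 1, g r ≤ 0) {s : ℝ} (hs : s ∈ Ioo 0 1) : g s ≤ g 1 * s ^ (m + 1) := by
  set K := ρ s / (m + 1)
  set H := fun r => g r + K * r ^ (m + 1)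
  have hH' : ∀ r ∈ Ioo 0 1, HasDerivAt H (r ^ m * (ρ s - ρ r)) r := by
    intro r hr
    refine ((hg' r hr).add ((hasDerivAt_pow (m + 1) r).const_mul K)).congr_deriv ?_
    simp only [K, Nat.add_sub_cancel, Nat.cast_add, Nat.cast_one]
    field_simp
    ring
  have hHc : ContinuousOn H (Ioc 0 1) := hg.add (by fun_prop)
  have hleft : H s ≤ 0 := by
    have hanti : AntitoneOn H (Ioc 0 s) := by
      refine antitoneOn_of_hasDerivWithinAt_nonpos (convex_Ioc 0 s)
        (f' := fun r => r ^ m * (ρ s - ρ r)) (hHc.mono (Ioc_subset_Ioc_right hs.2.le)) ?_ ?_ <;>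
        rw [interior_Ioc] <;> intro r hr
      · exact (hH' r ⟨hr.1, hr.2.trans hs.2⟩).hasDerivWithinAt
      · exact mul_nonpos_of_nonneg_of_nonpos (pow_nonneg hr.1.le m)
          (sub_nonpos.2 (hρ ⟨hr.1, hr.2.trans hs.2⟩ hs hr.2.le))
    have hev : ∀ᶠ ε in 𝓝[>] 0, H s ≤ K * ε ^ (m + 1) := by
      filter_upwards [Ioo_mem_nhdsGT hs.1] with ε hε
      linarith [hanti ⟨hε.1, hε.2.le⟩ ⟨hs.1, le_rfl⟩ hε.2.le, hg0 ε ⟨hε.1, hε.2.trans hs.2⟩]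
    have htend : Tendsto (fun ε : ℝ => K * ε ^ (m + 1)) (𝓝[>] 0) (𝓝 0) :=
      ((by fun_prop : Continuous fun ε : ℝ => K * ε ^ (m + 1)).tendsto' 0 0
        (by simp)).mono_left nhdsWithin_le_nhds
    exact ge_of_tendsto htend hev
  have hright : H s ≤ g 1 + K := by
    have hmono : MonotoneOn H (Icc s 1) := by
      refine monotoneOn_of_hasDerivWithinAt_nonneg (convex_Icc s 1)
        (f' := fun r => r ^ m * (ρ s - ρ r)) (hHc.mono (Icc_subset_Ioc_left hs.1)) ?_ ?_ <;>
        rw [interior_Icc] <;> intro r hr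
      · exact (hH' r ⟨hs.1.trans hr.1, hr.2⟩).hasDerivWithinAt
      · exact mul_nonneg (pow_nonneg (hs.1.trans hr.1).le m)
          (sub_nonneg.2 (hρ hs ⟨hs.1.trans hr.1, hr.2⟩ hr.1.le))
    simpa [H] using hmono ⟨le_rfl, hs.2.le⟩ ⟨hs.2.le, le_rfl⟩ hs.2.le
  have ht0 : 0 < s ^ (m + 1) := pow_pos hs.1 _
  have ht1 : s ^ (m + 1) < 1 := pow_lt_one₀ hs.1.le hs.2 (by omega)
  simp only [H] at hleft hright
  nlinarith [mul_le_mul_of_nonneg_left hleft (sub_nonneg.2 ht1.le),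
    mul_le_mul_of_nonneg_left hright ht0.le]

theorem le_add_half_of_deriv_le_mul_self {u : ℝ → ℝ} {a B : ℝ} (hu : ContinuousOn u (Ioc 0 1))
    (hu' : ∀ x ∈ Ioo 0 1, DifferentiableAt ℝ u x) (hderiv : ∀ x ∈ Ioo 0 1, deriv u x ≤ a * x)
    (hB : ∀ x ∈ Ioo 0 1, u x ≤ B) : u 1 ≤ B + a / 2 := by
  have hanti : AntitoneOn (fun x => u x - a / 2 * x ^ 2) (Ioc 0 1) := by
    refine antitoneOn_of_hasDerivWithinAt_nonpos (convex_Ioc 0 1)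
      (f' := fun x => deriv u x - a * x) (hu.sub (by fun_prop)) ?_ ?_ <;>
      rw [interior_Ioc] <;> intro x hx
    · refine ((hu' x hx).hasDerivAt.sub
        ((hasDerivAt_pow 2 x).const_mul (a / 2))).hasDerivWithinAt.congr_deriv ?_
      ring
    · linarith [hderiv x hx]
  have hev : ∀ᶠ ε in 𝓝[>] 0, u 1 - a / 2 ≤ B - a / 2 * ε ^ 2 := by
    filter_upwards [Ioo_mem_nhdsGT one_pos] with ε hε
    have := hanti ⟨hε.1, hε.2.le⟩ ⟨one_pos, le_rfl⟩ hε.2.le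
    simp only [one_pow, mul_one] at this
    linarith [hB ε hε]
  have htend : Tendsto (fun ε : ℝ => B - a / 2 * ε ^ 2) (𝓝[>] 0) (𝓝 B) :=
    ((by fun_prop : Continuous fun ε : ℝ => B - a / 2 * ε ^ 2).tendsto' 0 B
      (by simp)).mono_left nhdsWithin_le_nhds
  linarith [ge_of_tendsto htend hev]

/-- `-(u'' + (n - 1)/r u')`, i.e. `-Δ` applied to the radial function `x ↦ u ‖x‖` on `ℝⁿ`. -/
noncomputable def negRadialLaplacian (n : ℕ) (u : ℝ → ℝ) (r : ℝ) : ℝ :=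
  -(deriv (deriv u) r) - ((n : ℝ) - 1) / r * deriv u r

theorem continuousOn_negRadialLaplacian {n : ℕ} {u : ℝ → ℝ} {U : Set ℝ}
    (hu : ContDiffOn ℝ 2 u U) (hU : IsOpen U) (hU0 : (0 : ℝ) ∉ U) :
    ContinuousOn (negRadialLaplacian n u) U := by
  have hu' : ContDiffOn ℝ 1 (deriv u) U := hu.deriv_of_isOpen hU (by norm_num)
  exact (hu'.continuousOn_deriv_of_isOpen hU le_rfl).neg.sub
    ((continuousOn_const.div continuousOn_id fun x hx => ne_of_mem_of_not_mem hx hU0).mul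
      hu'.continuousOn)

theorem negRadialLaplacian_eq_zero_of_eventuallyEq {n : ℕ} {u : ℝ → ℝ} {r c : ℝ}
    (h : u =ᶠ[𝓝 r] fun _ => c) : negRadialLaplacian n u r = 0 := by
  have h' : deriv u =ᶠ[𝓝 r] fun _ => 0 := by simpa using h.deriv
  simp [negRadialLaplacian, h'.deriv_eq, h'.eq_of_nhds]

/-- Where `negRadialLaplacian n u < 0`, `u` cannot drop below `1`, so `u ≡ 1` near such a point
and the operator vanishes there after all. -/
theorem negRadialLaplacian_nonneg {n : ℕ} {u : ℝ → ℝ} {U : Set ℝ} (hU : IsOpen U)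
    (hcont : ContinuousOn (negRadialLaplacian n u) U) (hu1 : ∀ r ∈ U, u r ≤ 1)
    (hlt : ∀ r ∈ U, u r < 1 → 0 ≤ negRadialLaplacian n u r) :
    ∀ r ∈ U, 0 ≤ negRadialLaplacian n u r := by
  intro r hr
  by_contra! hneg
  have hloc : u =ᶠ[𝓝 r] fun _ => 1 := by
    filter_upwards [(hcont.continuousAt (hU.mem_nhds hr)).eventually_lt continuousAt_const hneg,
      hU.mem_nhds hr] with x hx hxU
    by_contra hx1
    exact (hlt x hxU ((hu1 x hxU).lt_of_ne hx1)).not_gt hx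
  exact hneg.ne (negRadialLaplacian_eq_zero_of_eventuallyEq hloc)

theorem negRadialLaplacian_eq_zero_of_eq_one {n : ℕ} {u : ℝ → ℝ} {a b r : ℝ}
    (hcont : ContinuousOn (negRadialLaplacian n u) (Ioo a b)) (hu : AntitoneOn u (Ioo a b))
    (hu1 : ∀ x ∈ Ioo a b, u x ≤ 1) (hr : r ∈ Ioo a b) (hur : u r = 1) :
    negRadialLaplacian n u r = 0 := by
  have hsub : Ioo a r ⊆ Ioo a b := Ioo_subset_Ioo_right hr.2.le
  have hzero : MapsTo (negRadialLaplacian n u) (Ioo a r) {0} := by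
    intro x hx
    apply negRadialLaplacian_eq_zero_of_eventuallyEq (c := 1)
    filter_upwards [isOpen_Ioo.mem_nhds hx] with y hy
    exact le_antisymm (hu1 y (hsub hy)) (hur ▸ hu (hsub hy) hr hy.2.le)
  simpa using ((hcont r hr).mono hsub).mem_closure
    (by rw [closure_Ioo hr.1.ne]; exact right_mem_Icc.2 hr.1.le) hzero

theorem hasDerivAt_pow_mul_deriv {m : ℕ} {u : ℝ → ℝ} {U : Set ℝ} {r : ℝ}
    (hu : ContDiffOn ℝ 2 u U) (hU : IsOpen U) (hr : r ∈ U) (hr0 : r ≠ 0) :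
    HasDerivAt (fun x => x ^ m * deriv u x) (-(r ^ m * negRadialLaplacian (m + 1) u r)) r := by
  have hu' : DifferentiableAt ℝ (deriv u) r :=
    ((hu.deriv_of_isOpen hU (m := 1) (by norm_num)).differentiableOn one_ne_zero).differentiableAt
      (hU.mem_nhds hr)
  refine ((hasDerivAt_pow m r).mul hu'.hasDerivAt).congr_deriv ?_
  rcases m with _ | m
  · simp [negRadialLaplacian]
  · simp only [negRadialLaplacian, Nat.add_sub_cancel, Nat.cast_add, Nat.cast_one, pow_succ]
    field_simp
    ring

theorem continuousOn_deriv_of_contDiffOn_Ioc {u : ℝ → ℝ} {a b : ℝ}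
    (hu : ContDiffOn ℝ 1 u (Ioc a b)) (hb : DifferentiableAt ℝ u b) :
    ContinuousOn (deriv u) (Ioc a b) := by
  refine (hu.continuousOn_derivWithin (uniqueDiffOn_Ioc a b) le_rfl).congr fun r hr => ?_
  rcases hr.2.lt_or_eq with hrb | rfl
  · exact (derivWithin_of_mem_nhds (Ioc_mem_nhds hr.1 hrb)).symm
  · exact (hb.derivWithin (uniqueDiffOn_Ioc a r r hr)).symm

theorem deriv_nonpos_of_negRadialLaplacian_nonneg {m : ℕ} {u : ℝ → ℝ} (hm : 1 ≤ m)
    (hu : ContDiffOn ℝ 2 u (Ioc 0 1)) (h1 : DifferentiableAt ℝ u 1)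
    (hu01 : ∀ r ∈ Ioo 0 1, 0 ≤ u r ∧ u r ≤ 1)
    (hψ : ∀ r ∈ Ioo 0 1, 0 ≤ negRadialLaplacian (m + 1) u r) :
    ∀ r ∈ Ioc 0 1, deriv u r ≤ 0 := by
  set g := fun r : ℝ => r ^ m * deriv u r
  have hu2 : ContDiffOn ℝ 2 u (Ioo 0 1) := hu.mono Ioo_subset_Ioc_self
  have hg : AntitoneOn g (Ioc 0 1) := by
    refine antitoneOn_of_hasDerivWithinAt_nonpos (convex_Ioc 0 1)
      (f' := fun r => -(r ^ m * negRadialLaplacian (m + 1) u r))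
      ((continuous_pow m).continuousOn.mul
        (continuousOn_deriv_of_contDiffOn_Ioc (hu.of_le (by norm_num)) h1)) ?_ ?_ <;>
      rw [interior_Ioc] <;> intro r hr
    · exact (hasDerivAt_pow_mul_deriv hu2 isOpen_Ioo hr hr.1.ne').hasDerivWithinAt
    · exact neg_nonpos.2 (mul_nonneg (pow_nonneg hr.1.le m) (hψ r hr))
  have hg0 : ∀ r ∈ Ioo (0 : ℝ) 1, g r ≤ 0 := fun r hr =>
    pow_mul_nonpos_of_antitoneOn hm
      (fun x hx => ((hu2.differentiableOn (by norm_num)).differentiableAt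
        (isOpen_Ioo.mem_nhds hx)).hasDerivAt) hu01 (hg.mono Ioo_subset_Ioc_self) hr
  intro r hr
  have hr2 : r / 2 ∈ Ioo (0 : ℝ) 1 := ⟨by linarith [hr.1], by linarith [hr.2]⟩
  exact nonpos_of_mul_nonpos_right ((hg ⟨hr2.1, hr2.2.le⟩ hr (by linarith [hr.1])).trans
    (hg0 _ hr2)) (pow_pos hr.1 m)

theorem le_add_half_deriv_of_antitoneOn_negRadialLaplacian {m : ℕ} {u : ℝ → ℝ} {B : ℝ}
    (hu : ContDiffOn ℝ 2 u (Ioc 0 1)) (h1 : DifferentiableAt ℝ u 1)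
    (hB : ∀ r ∈ Ioo 0 1, u r ≤ B) (hu' : ∀ r ∈ Ioo 0 1, deriv u r ≤ 0)
    (hψ : AntitoneOn (negRadialLaplacian (m + 1) u) (Ioo 0 1)) :
    u 1 ≤ B + deriv u 1 / 2 := by
  have hu2 : ContDiffOn ℝ 2 u (Ioo 0 1) := hu.mono Ioo_subset_Ioc_self
  have hcmp : ∀ s ∈ Ioo (0 : ℝ) 1, deriv u s ≤ deriv u 1 * s := by
    intro s hs
    have h := le_mul_pow_succ_of_hasDerivAt (g := fun r => r ^ m * deriv u r)
      ((continuous_pow m).continuousOn.mul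
        (continuousOn_deriv_of_contDiffOn_Ioc (hu.of_le (by norm_num)) h1))
      (fun r hr => hasDerivAt_pow_mul_deriv hu2 isOpen_Ioo hr hr.1.ne') hψ
      (fun r hr => mul_nonpos_of_nonneg_of_nonpos (pow_nonneg hr.1.le m) (hu' r hr)) hs
    rw [one_pow, one_mul, pow_succ, mul_left_comm] at h
    exact le_of_mul_le_mul_left h (pow_pos hs.1 m)
  exact le_add_half_of_deriv_le_mul_self hu.continuousOn
    (fun r hr => (hu2.differentiableOn (by norm_num)).differentiableAt (isOpen_Ioo.mem_nhds hr))
    hcmp hB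

theorem stmt_11_general (n : ℕ) (hn : 2 ≤ n) (u f : ℝ → ℝ)
    (hu : ContDiffOn ℝ 2 u (Set.Ioc 0 1)) (hu1 : u 1 = 0)
    (hub : ∀ r ∈ Set.Ioc (0:ℝ) 1, 0 ≤ u r ∧ u r ≤ 1)
    (hfpos : ∀ t ∈ Set.Ico (0:ℝ) 1, 0 ≤ f t)
    (hfmono : MonotoneOn f (Set.Ico 0 1))
    (heq : ∀ r ∈ Set.Ioo (0:ℝ) 1,
      -(deriv (deriv u) r) - ((n:ℝ) - 1) / r * deriv u r = f (u r)) :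
    |deriv u 1| ≤ 2 := by
  obtain hdiff | hdiff := em' (DifferentiableAt ℝ u 1)
  · simp [deriv_zero_of_not_differentiableAt hdiff]
  obtain ⟨m, rfl⟩ : ∃ m, n = m + 1 := ⟨n - 1, by omega⟩
  have hsub : Ioo (0 : ℝ) 1 ⊆ Ioc 0 1 := Ioo_subset_Ioc_self
  have hu01 : ∀ r ∈ Ioo (0 : ℝ) 1, 0 ≤ u r ∧ u r ≤ 1 := fun r hr => hub r (hsub hr)
  have hψ : ∀ r ∈ Ioo (0 : ℝ) 1, negRadialLaplacian (m + 1) u r = f (u r) := heq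
  have hψc : ContinuousOn (negRadialLaplacian (m + 1) u) (Ioo 0 1) :=
    continuousOn_negRadialLaplacian (hu.mono hsub) isOpen_Ioo (by simp)
  have hψ0 := negRadialLaplacian_nonneg isOpen_Ioo hψc (fun r hr => (hu01 r hr).2)
    fun r hr hr1 => (hψ r hr).symm ▸ hfpos _ ⟨(hu01 r hr).1, hr1⟩
  have hu' := deriv_nonpos_of_negRadialLaplacian_nonneg (by omega) hu hdiff hu01 hψ0
  have hu_anti : AntitoneOn u (Ioo 0 1) :=
    antitoneOn_of_deriv_nonpos (convex_Ioo 0 1) (hu.continuousOn.mono hsub)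
      (by rw [interior_Ioo]; exact (hu.mono hsub).differentiableOn (by norm_num))
      (by rw [interior_Ioo]; exact fun r hr => hu' r (hsub hr))
  have hψ_anti : AntitoneOn (negRadialLaplacian (m + 1) u) (Ioo 0 1) :=
    antitoneOn_of_eq_comp_of_eq_zero hu_anti hu01 hfmono hψc (fun r hr _ => hψ r hr)
      fun r hr => negRadialLaplacian_eq_zero_of_eq_one hψc hu_anti (fun x hx => (hu01 x hx).2) hr
  have hlower := le_add_half_deriv_of_antitoneOn_negRadialLaplacian hu hdiff
    (fun r hr => (hu01 r hr).2) (fun r hr => hu' r (hsub hr)) hψ_anti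
  have hupper := hu' 1 (right_mem_Ioc.2 one_pos)
  rw [abs_le]
  constructor <;> linarith

/-- For a C² radial solution `u` of `-u'' - (n-1)/r u' = f(u)` on
`(0,1)` with `u(1)=0`, `0 ≤ u ≤ 1` and `f ≥ 0` C¹ nondecreasing, `|u'(1)| ≤ 2`. -/
theorem stmt_11 (n : ℕ) (hn : 2 ≤ n) (u f : ℝ → ℝ)
    (hu : ContDiffOn ℝ 2 u (Set.Ioc 0 1)) (hu1 : u 1 = 0)
    (hub : ∀ r ∈ Set.Ioc (0:ℝ) 1, 0 ≤ u r ∧ u r ≤ 1)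
    (hf : ContDiffOn ℝ 1 f (Set.Ico 0 1))
    (hfpos : ∀ t ∈ Set.Ico (0:ℝ) 1, 0 ≤ f t)
    (hfmono : MonotoneOn f (Set.Ico 0 1))
    (heq : ∀ r ∈ Set.Ioo (0:ℝ) 1,
      -(deriv (deriv u) r) - ((n:ℝ) - 1) / r * deriv u r = f (u r)) :
    |deriv u 1| ≤ 2 :=
  stmt_11_general n hn u f hu hu1 hub hfpos hfmono heq
end

section
/- Let n ≥ 7 and define u(x) = 1 - |x| on the unit ball B₁ ⊂ ℝⁿ and f(t) = (n-1)/(1-t) for t ∈ [0,1). Then u satisfies -Δu = f(u) in B₁ \ {0}, u = 0 on ∂B₁, 0 ≤ u ≤ 1, and ‖u‖_{L^∞(B₁)} = 1 (so u is not regular). -/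
/-! Away from the origin the norm has gradient `x / ‖x‖` and Hessian `(I - x̂ x̂ᵀ) / ‖x‖`
with `x̂ = x / ‖x‖`, whose trace is `(n - 1) / ‖x‖`. Hence `-Δ(1 - ‖x‖) = (n - 1) / ‖x‖`,
which is exactly `f(1 - ‖x‖)`. The supremum of `|u|` on the ball is attained at the origin. -/

open scoped RealInnerProductSpace

section NormDerivatives

variable {E : Type*} [NormedAddCommGroup E] [InnerProductSpace ℝ E] {x : E}

theorem hasFDerivAt_norm_of_ne_zero (hx : x ≠ 0) :
    HasFDerivAt (fun y : E => ‖y‖) (‖x‖⁻¹ • innerSL ℝ x) x := by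
  have hsqrt := (hasStrictFDerivAt_norm_sq x).hasFDerivAt.sqrt (by simpa using hx)
  simp only [Real.sqrt_sq (norm_nonneg _)] at hsqrt
  convert hsqrt using 1
  ext v
  simp only [smul_apply, coe_innerSL_apply, smul_eq_mul, two_smul, add_apply]
  field_simp
  ring

theorem fderiv_norm_apply_of_ne_zero (hx : x ≠ 0) (v : E) :
    fderiv ℝ (fun y : E => ‖y‖) x v = ⟪x, v⟫ / ‖x‖ := by
  simp [(hasFDerivAt_norm_of_ne_zero hx).fderiv, div_eq_inv_mul]

theorem fderiv_fderiv_norm_apply_of_ne_zero (hx : x ≠ 0) (v : E) :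
    fderiv ℝ (fun y => fderiv ℝ (fun z : E => ‖z‖) y v) x v =
      (‖v‖ ^ 2 - (⟪x, v⟫ / ‖x‖) ^ 2) / ‖x‖ := by
  have hx' : ‖x‖ ≠ 0 := norm_ne_zero_iff.2 hx
  have hnear : (fun y => fderiv ℝ (fun z : E => ‖z‖) y v) =ᶠ[nhds x] fun y => ⟪v, y⟫ * ‖y‖⁻¹ := by
    filter_upwards [isOpen_compl_singleton.mem_nhds hx] with y hy
    rw [fderiv_norm_apply_of_ne_zero hy, real_inner_comm, div_eq_mul_inv]
  have hinner : HasFDerivAt (fun y : E => ⟪v, y⟫) (innerSL ℝ v) x := (innerSL ℝ v).hasFDerivAt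
  have hinv : HasFDerivAt (fun y : E => ‖y‖⁻¹) (-(‖x‖ ^ 2)⁻¹ • ‖x‖⁻¹ • innerSL ℝ x) x :=
    (hasDerivAt_inv hx').comp_hasFDerivAt x (hasFDerivAt_norm_of_ne_zero hx)
  rw [hnear.fderiv_eq, (hinner.fun_mul hinv).fderiv]
  simp only [add_apply, smul_apply, coe_innerSL_apply, smul_eq_mul, real_inner_self_eq_norm_sq,
    real_inner_comm x v]
  field_simp
  ring

theorem sum_fderiv_fderiv_norm {ι : Type*} [Fintype ι] (b : OrthonormalBasis ι ℝ E)
    (hx : x ≠ 0) :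
    ∑ i, fderiv ℝ (fun y => fderiv ℝ (fun z : E => ‖z‖) y (b i)) x (b i) =
      (Fintype.card ι - 1) / ‖x‖ := by
  have hx' : ‖x‖ ≠ 0 := norm_ne_zero_iff.2 hx
  simp only [fderiv_fderiv_norm_apply_of_ne_zero hx, b.orthonormal.1, div_pow,
    ← Finset.sum_div, Finset.sum_sub_distrib, b.sum_sq_inner_left]
  simp only [one_pow, Finset.sum_const, Finset.card_univ, nsmul_eq_mul, mul_one]
  field_simp

theorem sum_fderiv_fderiv_const_sub_norm {ι : Type*} [Fintype ι] (b : OrthonormalBasis ι ℝ E)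
    (c : ℝ) (hx : x ≠ 0) :
    ∑ i, fderiv ℝ (fun y => fderiv ℝ (fun z : E => c - ‖z‖) y (b i)) x (b i) =
      -((Fintype.card ι - 1) / ‖x‖) := by
  simp only [fderiv_const_sub, neg_apply, fderiv_fun_neg, Finset.sum_neg_distrib,
    sum_fderiv_fderiv_norm b hx]

end NormDerivatives

theorem sSup_abs_one_sub_norm_image_ball {E : Type*} [SeminormedAddCommGroup E] :
    sSup ((fun x : E => |1 - ‖x‖|) '' Metric.ball 0 1) = 1 := by
  refine IsGreatest.csSup_eq ⟨⟨0, Metric.mem_ball_self one_pos, by simp⟩, ?_⟩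
  rintro _ ⟨x, hx, rfl⟩
  rw [mem_ball_zero_iff] at hx
  show |1 - ‖x‖| ≤ 1
  rw [abs_of_pos (by linarith)]
  linarith [norm_nonneg x]

theorem stmt_13_general (n : ℕ)
    (u : EuclideanSpace ℝ (Fin n) → ℝ) (hu : ∀ x, u x = 1 - ‖x‖)
    (f : ℝ → ℝ) (hf : ∀ t : ℝ, t < 1 → f t = ((n:ℝ) - 1) / (1 - t)) :
    (∀ x : EuclideanSpace ℝ (Fin n), x ≠ 0 → ‖x‖ < 1 →
      -(∑ i : Fin n, fderiv ℝ (fun y => fderiv ℝ u y (EuclideanSpace.single i 1)) x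
          (EuclideanSpace.single i 1)) = f (u x)) ∧
    (∀ x : EuclideanSpace ℝ (Fin n), ‖x‖ = 1 → u x = 0) ∧
    (∀ x : EuclideanSpace ℝ (Fin n), ‖x‖ ≤ 1 → 0 ≤ u x ∧ u x ≤ 1) ∧
    sSup ((fun x => |u x|) '' Metric.ball (0 : EuclideanSpace ℝ (Fin n)) 1) = 1 := by
  obtain rfl : u = fun x => 1 - ‖x‖ := funext hu
  refine ⟨fun x hx0 hx1 => ?_, fun x hx => by simp [hx],
    fun x hx => ⟨by linarith, by linarith [norm_nonneg x]⟩, sSup_abs_one_sub_norm_image_ball⟩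
  have hlap := sum_fderiv_fderiv_const_sub_norm (EuclideanSpace.basisFun (Fin n) ℝ) 1 hx0
  simp only [EuclideanSpace.basisFun_apply, Fintype.card_fin] at hlap
  rw [hlap, neg_neg, hf _ (sub_lt_self 1 (norm_pos_iff.2 hx0)), sub_sub_cancel]

/-- For `n ≥ 7`, `u(x) = 1 - |x|` and `f(t) = (n-1)/(1-t)`, the
function `u` solves `-Δu = f(u)` in `B₁ \ {0}` (the Laplacian written as the sum
of second partial derivatives), vanishes on `∂B₁`, satisfies `0 ≤ u ≤ 1` on
`B₁`, and `‖u‖_{L^∞(B₁)} = 1`, so `u` is not regular. -/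
theorem stmt_13 (n : ℕ) (hn : 7 ≤ n)
    (u : EuclideanSpace ℝ (Fin n) → ℝ) (hu : ∀ x, u x = 1 - ‖x‖)
    (f : ℝ → ℝ) (hf : ∀ t : ℝ, t < 1 → f t = ((n:ℝ) - 1) / (1 - t)) :
    (∀ x : EuclideanSpace ℝ (Fin n), x ≠ 0 → ‖x‖ < 1 →
      -(∑ i : Fin n, fderiv ℝ (fun y => fderiv ℝ u y (EuclideanSpace.single i 1)) x
          (EuclideanSpace.single i 1)) = f (u x)) ∧
    (∀ x : EuclideanSpace ℝ (Fin n), ‖x‖ = 1 → u x = 0) ∧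
    (∀ x : EuclideanSpace ℝ (Fin n), ‖x‖ ≤ 1 → 0 ≤ u x ∧ u x ≤ 1) ∧
    sSup ((fun x => |u x|) '' Metric.ball (0 : EuclideanSpace ℝ (Fin n)) 1) = 1 :=
  stmt_13_general n u hu f hf
end

section
/- Let n ≥ 7 and u(x) = 1 - |x| on B₁ ⊂ ℝⁿ with f(t) = (n-1)/(1-t). Then u is a stable solution of -Δu = f(u): for every ξ ∈ C_c^∞(B₁ \ {0}), ∫_{B₁} f'(u) ξ² dx ≤ ∫_{B₁} |∇ξ|² dx. -/
open Set MeasureTheory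

open Filter Real InnerProductSpace

noncomputable section
namespace Stmt14

variable {n : ℕ}

def th (a t : ℝ) : ℝ := Real.smoothTransition ((t - a) / a)

lemma th_zero {a t : ℝ} (ha : 0 < a) (h : t ≤ a) : th a t = 0 :=
  Real.smoothTransition.zero_of_nonpos (div_nonpos_of_nonpos_of_nonneg (by linarith) ha.le)

lemma differentiable_th {a : ℝ} : Differentiable ℝ (th a) :=
  (Real.smoothTransition.contDiff (n := 1)).differentiable (by simp) |>.comp
    (((differentiable_id.sub (differentiable_const _)).div_const a))

lemma deriv_th_of_lt {a t : ℝ} (ha : 0 < a) (h : t < a) : deriv (th a) t = 0 := by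
  have : th a =ᶠ[nhds t] (fun _ => 0) := by
    filter_upwards [Iio_mem_nhds h] with s hs using th_zero ha (le_of_lt hs)
  rw [this.deriv_eq, deriv_const]

def g (a : ℝ) (i : Fin n) (x : EuclideanSpace ℝ (Fin n)) : ℝ :=
  th a (‖x‖ ^ 2) * (x i * (‖x‖ ^ 2)⁻¹)

def g' (a : ℝ) (i : Fin n) (x : EuclideanSpace ℝ (Fin n)) : ℝ :=
  deriv (th a) (‖x‖ ^ 2) * (2 * x i) * (x i * (‖x‖ ^ 2)⁻¹)
    + th a (‖x‖ ^ 2) * ((‖x‖ ^ 2)⁻¹ - 2 * (x i) ^ 2 * ((‖x‖ ^ 2)⁻¹) ^ 2)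

lemma norm_sq_line (x : EuclideanSpace ℝ (Fin n)) (i : Fin n) (t : ℝ) :
    ‖x + t • EuclideanSpace.single i (1:ℝ)‖ ^ 2 = ‖x‖ ^ 2 + 2 * x i * t + t ^ 2 := by
  rw [norm_add_sq_real, real_inner_smul_right, EuclideanSpace.inner_single_right,
    norm_smul, EuclideanSpace.norm_single]
  simp [mul_pow]
  ring

lemma apply_line (x : EuclideanSpace ℝ (Fin n)) (i : Fin n) (t : ℝ) :
    (x + t • EuclideanSpace.single i (1:ℝ)) i = x i + t := by
  simp [EuclideanSpace.single_apply]

lemma hasLineDerivAt_g {a : ℝ} (ha : 0 < a) (i : Fin n) (x : EuclideanSpace ℝ (Fin n)) :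
    HasLineDerivAt ℝ (g a i) (g' a i x) x (EuclideanSpace.single i (1:ℝ)) := by
  show HasDerivAt (fun t : ℝ => g a i (x + t • EuclideanSpace.single i (1:ℝ))) (g' a i x) 0
  have hfun : (fun t : ℝ => g a i (x + t • EuclideanSpace.single i (1:ℝ)))
      = fun t : ℝ => th a (‖x‖ ^ 2 + 2 * x i * t + t ^ 2)
          * ((x i + t) * (‖x‖ ^ 2 + 2 * x i * t + t ^ 2)⁻¹) := by
    funext t
    rw [g, norm_sq_line, apply_line]
  rw [hfun]
  set q : ℝ → ℝ := fun t => ‖x‖ ^ 2 + 2 * x i * t + t ^ 2 with hq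
  have hq0 : q 0 = ‖x‖ ^ 2 := by simp [hq]
  have hqd : HasDerivAt q (2 * x i) 0 := by
    have h1 : HasDerivAt (fun t : ℝ => ‖x‖ ^ 2 + 2 * x i * t + t ^ 2)
        (0 + 2 * x i * 1 + 2 * 0 ^ 1) 0 := by
      exact ((hasDerivAt_const _ _).add ((hasDerivAt_id 0).const_mul (2 * x i))).add
        (hasDerivAt_pow 2 0)
    simpa using h1
  rcases lt_or_ge (‖x‖ ^ 2) a with hx | hx
  · -- near zero: the function vanishes in a neighbourhood
    have hg' : g' a i x = 0 := by
      rw [g', th_zero ha hx.le, deriv_th_of_lt ha hx]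
      ring
    rw [hg']
    have hcont : Continuous q := by fun_prop
    have hev : (fun t : ℝ => th a (q t) * ((x i + t) * (q t)⁻¹)) =ᶠ[nhds (0:ℝ)]
        (fun _ => (0:ℝ)) := by
      have : ∀ᶠ t in nhds (0:ℝ), q t < a := by
        have := hcont.continuousAt (x := (0:ℝ))
        exact this.eventually_lt continuousAt_const (by rwa [hq0])
      filter_upwards [this] with t ht
      rw [th_zero ha ht.le, zero_mul]
    exact (hasDerivAt_const (0:ℝ) (0:ℝ)).congr_of_eventuallyEq hev
  · -- away from zero : usual calculus
    have hc : (0:ℝ) < ‖x‖ ^ 2 := lt_of_lt_of_le ha hx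
    have hth : HasDerivAt (fun t => th a (q t)) (deriv (th a) (‖x‖ ^ 2) * (2 * x i)) 0 := by
      have h2 : HasDerivAt (th a) (deriv (th a) (q 0)) (q 0) :=
        (differentiable_th (q 0)).hasDerivAt
      have := h2.comp 0 hqd
      rwa [hq0] at this
    have hinv : HasDerivAt (fun t => (q t)⁻¹) (-(2 * x i) / (‖x‖ ^ 2) ^ 2) 0 := by
      have := hqd.inv (x := 0) (by rw [hq0]; exact hc.ne')
      rwa [hq0] at this
    have hlin : HasDerivAt (fun t : ℝ => x i + t) 1 0 := (hasDerivAt_id 0).const_add (x i)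
    have hmul2 : HasDerivAt (fun t => (x i + t) * (q t)⁻¹)
        (1 * (‖x‖ ^ 2)⁻¹ + (x i + 0) * (-(2 * x i) / (‖x‖ ^ 2) ^ 2)) 0 := by
      have := hlin.mul hinv
      rwa [hq0] at this
    have htotal := hth.mul hmul2
    rw [hq0] at htotal
    refine htotal.congr_deriv ?_
    rw [g']
    simp only [div_eq_mul_inv, ← inv_pow]
    ring

lemma integrable_helper {ψ φ : EuclideanSpace ℝ (Fin n) → ℝ}
    (hψ : Continuous ψ) (hψc : HasCompactSupport ψ)
    (h0 : (0 : EuclideanSpace ℝ (Fin n)) ∉ tsupport ψ)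
    (hφ : ∀ x : EuclideanSpace ℝ (Fin n), x ≠ 0 → ContinuousAt φ x) :
    Integrable (fun x => φ x * ψ x) := by
  have hc : Continuous fun x => φ x * ψ x := by
    rw [continuous_iff_continuousAt]; intro x
    by_cases hx : x = 0
    · subst hx
      have hz : (fun x => φ x * ψ x) =ᶠ[nhds (0 : EuclideanSpace ℝ (Fin n))] fun _ => 0 := by
        filter_upwards [(isClosed_tsupport ψ).isOpen_compl.mem_nhds h0] with y hy
        rw [image_eq_zero_of_notMem_tsupport hy, mul_zero]
      exact continuousAt_const.congr hz.symm
    · exact (hφ x hx).mul hψ.continuousAt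
  exact hc.integrable_of_hasCompactSupport (hψc.mul_left)

lemma continuousAt_inv_norm_sq {x : EuclideanSpace ℝ (Fin n)} (hx : x ≠ 0) :
    ContinuousAt (fun y : EuclideanSpace ℝ (Fin n) => (‖y‖ ^ 2)⁻¹) x :=
  ((continuous_norm.pow 2).continuousAt).inv₀ (pow_ne_zero 2 (norm_ne_zero_iff.2 hx))

lemma continuousAt_coord (i : Fin n) (x : EuclideanSpace ℝ (Fin n)) :
    ContinuousAt (fun y : EuclideanSpace ℝ (Fin n) => y i) x :=
  (EuclideanSpace.proj i : EuclideanSpace ℝ (Fin n) →L[ℝ] ℝ).continuous.continuousAt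

lemma th_one {a t : ℝ} (ha : 0 < a) (h : 2 * a ≤ t) : th a t = 1 :=
  Real.smoothTransition.one_of_one_le ((le_div_iff₀ ha).2 (by linarith))

lemma deriv_th_of_gt {a t : ℝ} (ha : 0 < a) (h : 2 * a < t) : deriv (th a) t = 0 := by
  have : th a =ᶠ[nhds t] (fun _ => 1) := by
    filter_upwards [Ioi_mem_nhds h] with s hs using th_one ha (le_of_lt hs)
  rw [this.deriv_eq, deriv_const]

section IBP

variable {ξ : EuclideanSpace ℝ (Fin n) → ℝ} {a : ℝ}

lemma tsupport_sq_subset : tsupport (fun y => ξ y ^ 2) ⊆ tsupport ξ :=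
  closure_mono (fun x hx => by
    simp only [Function.mem_support] at hx ⊢
    exact fun h => hx (by rw [h]; ring))

lemma tsupport_fderiv_sq_apply_subset (v : EuclideanSpace ℝ (Fin n)) :
    tsupport (fun x => fderiv ℝ (fun y => ξ y ^ 2) x v) ⊆ tsupport ξ := by
  refine subset_trans (closure_mono fun x hx => ?_) (subset_trans
    (tsupport_fderiv_subset ℝ) tsupport_sq_subset)
  simp only [Function.mem_support] at hx ⊢
  exact fun h => hx (by rw [h]; simp)

lemma ibp (ha : 0 < a) (hξ : ContDiff ℝ (⊤ : ℕ∞) ξ) (hcs : HasCompactSupport ξ)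
    (hsupp : ∀ x ∈ tsupport ξ, 2 * a < ‖x‖ ^ 2) (i : Fin n) :
    ∫ x : EuclideanSpace ℝ (Fin n),
        (x i * (‖x‖ ^ 2)⁻¹) * fderiv ℝ (fun y => ξ y ^ 2) x (EuclideanSpace.single i 1)
      = - ∫ x : EuclideanSpace ℝ (Fin n),
        ((‖x‖ ^ 2)⁻¹ - 2 * (x i) ^ 2 * ((‖x‖ ^ 2)⁻¹) ^ 2) * ξ x ^ 2 := by
  set ξsq : EuclideanSpace ℝ (Fin n) → ℝ := fun y => ξ y ^ 2 with hξsq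
  set D : EuclideanSpace ℝ (Fin n) → ℝ :=
    fun x => fderiv ℝ ξsq x (EuclideanSpace.single i 1) with hD
  have h0 : (0 : EuclideanSpace ℝ (Fin n)) ∉ tsupport ξ := by
    intro h
    have := hsupp 0 h
    simp at this
    linarith
  have hξsqc : ContDiff ℝ (⊤ : ℕ∞) ξsq := hξ.pow 2
  have hξsqcont : Continuous ξsq := hξ.continuous.pow 2
  have hξsqsupp : HasCompactSupport ξsq := hcs.comp_left (g := fun t : ℝ => t ^ 2) (by simp)
  have hDcont : Continuous D :=
    (hξsqc.continuous_fderiv (by simp)).clm_apply continuous_const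
  have hDzero : ∀ x ∉ tsupport ξ, D x = 0 := by
    intro x hx
    have hx2 : x ∉ tsupport ξsq := fun h => hx (tsupport_sq_subset h)
    simp only [hD, fderiv_of_notMem_tsupport ℝ hx2, ContinuousLinearMap.zero_apply]
  have hDsupp : HasCompactSupport D :=
    HasCompactSupport.intro hcs (fun x hx => hDzero x hx)
  have hξzero : ∀ x ∉ tsupport ξ, ξ x = 0 := fun x hx => image_eq_zero_of_notMem_tsupport hx
  have hsupTD : tsupport D ⊆ tsupport ξ :=
    closure_minimal (fun x hx => by
      by_contra h
      exact hx (hDzero x h)) (isClosed_tsupport ξ)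
  have h0D : (0 : EuclideanSpace ℝ (Fin n)) ∉ tsupport D := fun h => h0 (hsupTD h)
  have h0sq : (0 : EuclideanSpace ℝ (Fin n)) ∉ tsupport ξsq :=
    fun h => h0 (tsupport_sq_subset h)
  -- pointwise identifications of the integrands
  have eq1 : (fun x => g' a i x * ξsq x)
      = fun x => ((‖x‖ ^ 2)⁻¹ - 2 * (x i) ^ 2 * ((‖x‖ ^ 2)⁻¹) ^ 2) * ξsq x := by
    funext x
    by_cases hx : x ∈ tsupport ξ
    · rw [g', th_one ha (hsupp x hx).le, deriv_th_of_gt ha (hsupp x hx)]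
      ring
    · simp only [hξsq, hξzero x hx]
      ring
  have eq2 : (fun x => g a i x * D x) = fun x => (x i * (‖x‖ ^ 2)⁻¹) * D x := by
    funext x
    by_cases hx : x ∈ tsupport ξ
    · rw [g, th_one ha (hsupp x hx).le, one_mul]
    · rw [hDzero x hx, mul_zero, mul_zero]
  have eq3 : (fun x => g a i x * ξsq x) = fun x => (x i * (‖x‖ ^ 2)⁻¹) * ξsq x := by
    funext x
    by_cases hx : x ∈ tsupport ξ
    · rw [g, th_one ha (hsupp x hx).le, one_mul]
    · simp only [hξsq, hξzero x hx]
      ring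
  -- integrability
  have int1 : Integrable (fun x => g' a i x * ξsq x) := by
    rw [eq1]
    exact integrable_helper hξsqcont hξsqsupp h0sq (fun x hx =>
      (continuousAt_inv_norm_sq hx).sub
        ((continuousAt_const.mul ((continuousAt_coord i x).pow 2)).mul
          ((continuousAt_inv_norm_sq hx).pow 2)))
  have int2 : Integrable (fun x => g a i x * D x) := by
    rw [eq2]
    exact integrable_helper hDcont hDsupp h0D (fun x hx =>
      (continuousAt_coord i x).mul (continuousAt_inv_norm_sq hx))
  have int3 : Integrable (fun x => g a i x * ξsq x) := by
    rw [eq3]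
    exact integrable_helper hξsqcont hξsqsupp h0sq (fun x hx =>
      (continuousAt_coord i x).mul (continuousAt_inv_norm_sq hx))
  -- integration by parts via the line-derivative lemma
  have key : ∫ x, g a i x * D x = - ∫ x, g' a i x * ξsq x := by
    have := integral_bilinear_hasLineDerivAt_right_eq_neg_left_of_integrable
      (μ := (volume : Measure (EuclideanSpace ℝ (Fin n))))
      (B := ContinuousLinearMap.mul ℝ ℝ) (f := g a i) (f' := fun x => g' a i x)
      (g := ξsq) (g' := D) (v := EuclideanSpace.single i 1)
      (by simpa using int1) (by simpa using int2) (by simpa using int3)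
      (fun x _ => hasLineDerivAt_g ha i x)
      (fun x _ => ((hξsqc.differentiable (by simp) x).hasFDerivAt).hasLineDerivAt _)
    simpa using this
  calc ∫ x, (x i * (‖x‖ ^ 2)⁻¹) * D x = ∫ x, g a i x * D x := by rw [eq2]
    _ = - ∫ x, g' a i x * ξsq x := key
    _ = - ∫ x, ((‖x‖ ^ 2)⁻¹ - 2 * (x i) ^ 2 * ((‖x‖ ^ 2)⁻¹) ^ 2) * ξsq x := by rw [eq1]

end IBP

lemma sum_sq_coords (x : EuclideanSpace ℝ (Fin n)) : ∑ i, (x i) ^ 2 = ‖x‖ ^ 2 := by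
  rw [EuclideanSpace.norm_eq, Real.sq_sqrt (by positivity)]
  simp [sq_abs]

lemma grad_sq (ξ : EuclideanSpace ℝ (Fin n) → ℝ) (x : EuclideanSpace ℝ (Fin n)) :
    ‖gradient ξ x‖ ^ 2 = ∑ i, (fderiv ℝ ξ x (EuclideanSpace.single i 1)) ^ 2 := by
  rw [← sum_sq_coords (gradient ξ x)]
  congr 1
  funext i
  congr 1
  have : (gradient ξ x) i = inner ℝ (gradient ξ x) (EuclideanSpace.single i (1:ℝ)) := by
    rw [EuclideanSpace.inner_single_right]
    simp
  rw [this, gradient, InnerProductSpace.toDual_symm_apply]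

end Stmt14

open Stmt14

/-- For `n ≥ 7`, `u(x) = 1 - |x|` and `f(t) = (n-1)/(1-t)`, the
solution `u` is stable: for every smooth `ξ` compactly supported in `B₁ \ {0}`,
`∫_{B₁} f'(u) ξ² dx ≤ ∫_{B₁} |∇ξ|² dx`. -/
theorem stmt_14 (n : ℕ) (hn : 7 ≤ n)
    (u : EuclideanSpace ℝ (Fin n) → ℝ) (hu : ∀ x, u x = 1 - ‖x‖)
    (f : ℝ → ℝ) (hf : ∀ t : ℝ, t < 1 → f t = ((n:ℝ) - 1) / (1 - t)) :
    ∀ ξ : EuclideanSpace ℝ (Fin n) → ℝ, ContDiff ℝ (⊤ : ℕ∞) ξ → HasCompactSupport ξ →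
      tsupport ξ ⊆ Metric.ball (0 : EuclideanSpace ℝ (Fin n)) 1 \ {0} →
      ∫ x in Metric.ball (0 : EuclideanSpace ℝ (Fin n)) 1, deriv f (u x) * (ξ x) ^ 2
        ≤ ∫ x in Metric.ball (0 : EuclideanSpace ℝ (Fin n)) 1, ‖gradient ξ x‖ ^ 2 := by
  intro ξ hξ hcs hsupp
  classical
  -- basic facts about the support
  have h0 : (0 : EuclideanSpace ℝ (Fin n)) ∉ tsupport ξ := fun h => (hsupp h).2 rfl
  have hball : tsupport ξ ⊆ Metric.ball (0 : EuclideanSpace ℝ (Fin n)) 1 := fun x hx => (hsupp hx).1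
  have hξzero : ∀ x ∉ tsupport ξ, ξ x = 0 := fun x hx => image_eq_zero_of_notMem_tsupport hx
  by_cases hz : ξ = 0
  · subst hz
    simp only [Pi.zero_apply, ne_eq, OfNat.ofNat_ne_zero, not_false_eq_true, zero_pow, mul_zero,
      integral_zero]
    exact integral_nonneg fun x => by positivity
  -- the support is bounded away from 0
  have hne : (tsupport ξ).Nonempty := by
    rcases Function.support_nonempty_iff.2 hz with ⟨x, hx⟩
    exact ⟨x, subset_closure hx⟩
  set r := Metric.infDist (0 : EuclideanSpace ℝ (Fin n)) (tsupport ξ) with hrdef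
  have hr : 0 < r := ((isClosed_tsupport ξ).notMem_iff_infDist_pos hne).1 h0
  have hrle : ∀ x ∈ tsupport ξ, r ≤ ‖x‖ := by
    intro x hx
    have := Metric.infDist_le_dist_of_mem (x := (0 : EuclideanSpace ℝ (Fin n))) hx
    rwa [dist_zero_left] at this
  set a := r ^ 2 / 3 with hadef
  have ha : 0 < a := by positivity
  have hsupp2 : ∀ x ∈ tsupport ξ, 2 * a < ‖x‖ ^ 2 := by
    intro x hx
    have h1 := hrle x hx
    have : r ^ 2 ≤ ‖x‖ ^ 2 := by nlinarith
    rw [hadef]; nlinarith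
  -- abbreviations
  set Dξ : Fin n → EuclideanSpace ℝ (Fin n) → ℝ :=
    fun i x => fderiv ℝ ξ x (EuclideanSpace.single i 1) with hDξdef
  set D : Fin n → EuclideanSpace ℝ (Fin n) → ℝ :=
    fun i x => fderiv ℝ (fun y => ξ y ^ 2) x (EuclideanSpace.single i 1) with hDdef
  set lam : ℝ := ((n : ℝ) - 2) / 2 with hlamdef
  have hdiff : Differentiable ℝ ξ := hξ.differentiable (by simp)
  -- derivative of the square
  have hDsq : ∀ i x, D i x = 2 * ξ x * Dξ i x := by
    intro i x
    have hfe : (fun y => ξ y ^ 2) = fun y => ξ y * ξ y := by funext y; ring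
    rw [hDdef]
    simp only [hfe, fderiv_fun_mul (hdiff x) (hdiff x), ContinuousLinearMap.add_apply,
      ContinuousLinearMap.smul_apply, smul_eq_mul, hDξdef]
    ring
  -- continuity and support facts
  have hξsqcont : Continuous fun y : EuclideanSpace ℝ (Fin n) => ξ y ^ 2 := hξ.continuous.pow 2
  have hξsqsupp : HasCompactSupport fun y : EuclideanSpace ℝ (Fin n) => ξ y ^ 2 :=
    hcs.comp_left (g := fun t : ℝ => t ^ 2) (by simp)
  have h0sq : (0 : EuclideanSpace ℝ (Fin n)) ∉ tsupport fun y => ξ y ^ 2 :=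
    fun h => h0 (tsupport_sq_subset h)
  have hDξcont : ∀ i, Continuous (Dξ i) := fun i =>
    (hξ.continuous_fderiv (by simp)).clm_apply continuous_const
  have hDξzero : ∀ i, ∀ x ∉ tsupport ξ, Dξ i x = 0 := by
    intro i x hx
    simp only [hDξdef, fderiv_of_notMem_tsupport ℝ hx, ContinuousLinearMap.zero_apply]
  have hDξsupp : ∀ i, HasCompactSupport (Dξ i) := fun i =>
    HasCompactSupport.intro hcs (hDξzero i)
  have h0Dξ : ∀ i, (0 : EuclideanSpace ℝ (Fin n)) ∉ tsupport (Dξ i) := by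
    intro i h
    exact h0 (closure_minimal (fun x hx => by
      by_contra hc
      exact hx (hDξzero i x hc)) (isClosed_tsupport ξ) h)
  have hDcont : ∀ i, Continuous (D i) := fun i =>
    ((hξ.pow 2).continuous_fderiv (by simp)).clm_apply continuous_const
  have hDzero : ∀ i, ∀ x ∉ tsupport ξ, D i x = 0 := by
    intro i x hx
    rw [hDsq i x, hξzero x hx]
    ring
  have hDsupp : ∀ i, HasCompactSupport (D i) := fun i =>
    HasCompactSupport.intro hcs (hDzero i)
  have h0D : ∀ i, (0 : EuclideanSpace ℝ (Fin n)) ∉ tsupport (D i) := by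
    intro i h
    exact h0 (closure_minimal (fun x hx => by
      by_contra hc
      exact hx (hDzero i x hc)) (isClosed_tsupport ξ) h)
  -- integrable families
  have intT : ∀ i : Fin n, Integrable (fun x => Dξ i x ^ 2) := by
    intro i
    have := integrable_helper (hDξcont i) (hDξsupp i) (h0Dξ i)
      (fun x _ => (hDξcont i).continuousAt) (φ := Dξ i)
    refine this.congr (Eventually.of_forall fun x => ?_)
    ring
  have intU : ∀ i : Fin n, Integrable (fun x => (x i * (‖x‖ ^ 2)⁻¹) * D i x) := fun i =>
    integrable_helper (hDcont i) (hDsupp i) (h0D i)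
      (fun x hx => (continuousAt_coord i x).mul (continuousAt_inv_norm_sq hx))
  have intW : ∀ i : Fin n, Integrable
      (fun x => ((‖x‖ ^ 2)⁻¹ - 2 * (x i) ^ 2 * ((‖x‖ ^ 2)⁻¹) ^ 2) * ξ x ^ 2) := fun i =>
    integrable_helper hξsqcont hξsqsupp h0sq (fun x hx =>
      (continuousAt_inv_norm_sq hx).sub
        ((continuousAt_const.mul ((continuousAt_coord i x).pow 2)).mul
          ((continuousAt_inv_norm_sq hx).pow 2)))
  have intC : Integrable (fun x : EuclideanSpace ℝ (Fin n) => (‖x‖ ^ 2)⁻¹ * ξ x ^ 2) :=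
    integrable_helper hξsqcont hξsqsupp h0sq (fun x hx => continuousAt_inv_norm_sq hx)
  -- pointwise summation identities
  have sumW : ∀ x : EuclideanSpace ℝ (Fin n),
      (∑ i, ((‖x‖ ^ 2)⁻¹ - 2 * (x i) ^ 2 * ((‖x‖ ^ 2)⁻¹) ^ 2) * ξ x ^ 2)
        = ((n : ℝ) - 2) * ((‖x‖ ^ 2)⁻¹ * ξ x ^ 2) := by
    intro x
    by_cases hx : x = 0
    · subst hx; simp
    · have hx2 : ‖x‖ ^ 2 ≠ 0 := pow_ne_zero 2 (norm_ne_zero_iff.2 hx)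
      rw [← Finset.sum_mul]
      have : (∑ i, ((‖x‖ ^ 2)⁻¹ - 2 * (x i) ^ 2 * ((‖x‖ ^ 2)⁻¹) ^ 2))
          = ((n : ℝ) - 2) * (‖x‖ ^ 2)⁻¹ := by
        rw [Finset.sum_sub_distrib, Finset.sum_const, Finset.card_univ, Fintype.card_fin]
        have h2 : (∑ i, 2 * (x i) ^ 2 * ((‖x‖ ^ 2)⁻¹) ^ 2)
            = 2 * ‖x‖ ^ 2 * ((‖x‖ ^ 2)⁻¹) ^ 2 := by
          rw [show (2:ℝ) * ‖x‖ ^ 2 * ((‖x‖ ^ 2)⁻¹) ^ 2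
              = (∑ i, (x i) ^ 2) * (2 * ((‖x‖ ^ 2)⁻¹) ^ 2) by rw [sum_sq_coords x]; ring,
            Finset.sum_mul]
          exact Finset.sum_congr rfl fun i _ => by ring
        rw [h2]
        field_simp
        rw [nsmul_eq_mul]
        field_simp
      rw [this, mul_assoc]
  have expand : ∀ x : EuclideanSpace ℝ (Fin n),
      (∑ i, (Dξ i x + lam * ξ x * (x i * (‖x‖ ^ 2)⁻¹)) ^ 2)
        = (∑ i, Dξ i x ^ 2) + lam * (∑ i, (x i * (‖x‖ ^ 2)⁻¹) * D i x)
          + lam ^ 2 * ((‖x‖ ^ 2)⁻¹ * ξ x ^ 2) := by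
    intro x
    have hper : ∀ i : Fin n, (Dξ i x + lam * ξ x * (x i * (‖x‖ ^ 2)⁻¹)) ^ 2
        = Dξ i x ^ 2 + lam * ((x i * (‖x‖ ^ 2)⁻¹) * D i x)
          + lam ^ 2 * ((x i) ^ 2 * ((‖x‖ ^ 2)⁻¹) ^ 2 * ξ x ^ 2) := by
      intro i
      rw [hDsq i x]
      ring
    rw [Finset.sum_congr rfl fun i _ => hper i, Finset.sum_add_distrib,
      Finset.sum_add_distrib, ← Finset.mul_sum, ← Finset.mul_sum]
    congr 1
    -- last term
    by_cases hx : x = 0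
    · subst hx; simp
    · have hx2 : ‖x‖ ^ 2 ≠ 0 := pow_ne_zero 2 (norm_ne_zero_iff.2 hx)
      congr 1
      have : (∑ i, (x i) ^ 2 * ((‖x‖ ^ 2)⁻¹) ^ 2 * ξ x ^ 2)
          = (∑ i, (x i) ^ 2) * (((‖x‖ ^ 2)⁻¹) ^ 2 * ξ x ^ 2) := by
        rw [Finset.sum_mul]
        congr 1
        funext i
        ring
      rw [this, sum_sq_coords x]
      field_simp
  -- the Hardy inequality via integration by parts
  set Ic : ℝ := ∫ x : EuclideanSpace ℝ (Fin n), (‖x‖ ^ 2)⁻¹ * ξ x ^ 2 with hIcdef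
  have hIcnonneg : 0 ≤ Ic := integral_nonneg fun x => by positivity
  have key1 : ∀ i : Fin n, (∫ x, (x i * (‖x‖ ^ 2)⁻¹) * D i x)
      = - ∫ x, ((‖x‖ ^ 2)⁻¹ - 2 * (x i) ^ 2 * ((‖x‖ ^ 2)⁻¹) ^ 2) * ξ x ^ 2 :=
    fun i => ibp ha hξ hcs hsupp2 i
  have hB : (∑ i, ∫ x, (x i * (‖x‖ ^ 2)⁻¹) * D i x) = - (((n : ℝ) - 2) * Ic) := by
    rw [Finset.sum_congr rfl fun i _ => key1 i, Finset.sum_neg_distrib,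
      ← integral_finset_sum Finset.univ (fun i _ => intW i)]
    simp only [sumW]
    rw [integral_const_mul]
  have intA : Integrable (fun x : EuclideanSpace ℝ (Fin n) => ∑ i, Dξ i x ^ 2) :=
    integrable_finset_sum _ (fun i _ => intT i)
  have intB : Integrable (fun x : EuclideanSpace ℝ (Fin n) =>
      ∑ i, (x i * (‖x‖ ^ 2)⁻¹) * D i x) :=
    integrable_finset_sum _ (fun i _ => intU i)
  have hP : 0 ≤ ∫ x : EuclideanSpace ℝ (Fin n),
      ∑ i, (Dξ i x + lam * ξ x * (x i * (‖x‖ ^ 2)⁻¹)) ^ 2 :=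
    integral_nonneg fun x => Finset.sum_nonneg fun i _ => sq_nonneg _
  have hsplit : (∫ x : EuclideanSpace ℝ (Fin n),
        ∑ i, (Dξ i x + lam * ξ x * (x i * (‖x‖ ^ 2)⁻¹)) ^ 2)
      = (∫ x, ∑ i, Dξ i x ^ 2) + lam * (∑ i, ∫ x, (x i * (‖x‖ ^ 2)⁻¹) * D i x)
        + lam ^ 2 * Ic := by
    have intAB : Integrable (fun x : EuclideanSpace ℝ (Fin n) =>
        (∑ i, Dξ i x ^ 2) + lam * ∑ i, (x i * (‖x‖ ^ 2)⁻¹) * D i x) := by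
      exact intA.add (intB.const_mul lam)
    simp only [expand]
    rw [integral_add intAB (intC.const_mul (lam ^ 2))]
    rw [integral_add intA (intB.const_mul lam), integral_const_mul, integral_const_mul,
      integral_finset_sum Finset.univ (fun i _ => intU i)]
  have hardy : lam ^ 2 * Ic ≤ ∫ x, ∑ i, Dξ i x ^ 2 := by
    have h1 := hP
    rw [hsplit, hB] at h1
    have h2 : (n : ℝ) - 2 = 2 * lam := by rw [hlamdef]; ring
    rw [h2] at h1
    nlinarith [h1]
  -- reduction of the left-hand side
  have hLHS : (∫ x in Metric.ball (0 : EuclideanSpace ℝ (Fin n)) 1, deriv f (u x) * ξ x ^ 2)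
      = ((n : ℝ) - 1) * Ic := by
    have hfun : (fun x : EuclideanSpace ℝ (Fin n) => deriv f (u x) * ξ x ^ 2)
        = fun x => ((n : ℝ) - 1) * ((‖x‖ ^ 2)⁻¹ * ξ x ^ 2) := by
      funext x
      by_cases hxz : ξ x = 0
      · rw [hxz]; ring
      · have hxne : x ≠ 0 := fun h => hxz (by rw [h]; exact hξzero 0 h0)
        have hxn : 0 < ‖x‖ := norm_pos_iff.2 hxne
        have hlt : u x < 1 := by rw [hu x]; linarith
        have hev : f =ᶠ[nhds (u x)] fun t => ((n : ℝ) - 1) * (1 - t)⁻¹ := by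
          filter_upwards [Iio_mem_nhds hlt] with t ht
          rw [hf t ht, div_eq_mul_inv]
        have h1 : HasDerivAt (fun t : ℝ => 1 - t) (-1) (u x) := by
          simpa using (hasDerivAt_id (u x)).const_sub 1
        have h1' : (1 : ℝ) - u x ≠ 0 := by rw [hu x]; simpa using hxn.ne'
        have h2 := h1.inv h1'
        have h3 := HasDerivAt.const_mul ((n : ℝ) - 1) h2
        have hderiv : deriv f (u x) = ((n : ℝ) - 1) * (-(-1) / (1 - u x) ^ 2) := by
          rw [hev.deriv_eq]; exact h3.deriv
        rw [hderiv, hu x, show (1 - (1 - ‖x‖)) = ‖x‖ by ring,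
          show -(-1 : ℝ) / ‖x‖ ^ 2 = (‖x‖ ^ 2)⁻¹ by rw [neg_neg, one_div]]
        ring
    rw [hfun, setIntegral_eq_integral_of_forall_compl_eq_zero (fun x hx => by
      rw [hξzero x fun h => hx (hball h)]; ring), integral_const_mul]
  -- reduction of the right-hand side
  have hRHS : (∫ x in Metric.ball (0 : EuclideanSpace ℝ (Fin n)) 1, ‖gradient ξ x‖ ^ 2)
      = ∫ x, ∑ i, Dξ i x ^ 2 := by
    have hfun : (fun x : EuclideanSpace ℝ (Fin n) => ‖gradient ξ x‖ ^ 2)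
        = fun x => ∑ i, Dξ i x ^ 2 := by
      funext x; exact grad_sq ξ x
    rw [hfun, setIntegral_eq_integral_of_forall_compl_eq_zero]
    intro x hx
    exact Finset.sum_eq_zero fun i _ => by
      rw [hDξzero i x fun h => hx (hball h)]; ring
  -- conclusion
  have hcoef : (n : ℝ) - 1 ≤ lam ^ 2 := by
    have h7 : (7 : ℝ) ≤ (n : ℝ) := by exact_mod_cast hn
    rw [hlamdef]
    nlinarith
  rw [hLHS, hRHS]
  calc ((n : ℝ) - 1) * Ic ≤ lam ^ 2 * Ic := mul_le_mul_of_nonneg_right hcoef hIcnonneg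
    _ ≤ _ := hardy
end
end

section
/- Let 2 ≤ n ≤ 6 and suppose u : (0,1] → ℝ is a C² radial solution of -u''-(n-1)u'/r = f(u) on (0,1) with u(1)=0, 0 ≤ u ≤ 1, f : [0,1) → [0,∞) C¹, F(t) = ∫₀ᵗ f ds with F(1) = +∞, and assume the decay bound |u'(t)| ≤ C_n|u'(1)| t^{-n/2+√(n-1)+1} for all t ∈ (0,1] (valid for stable solutions). Then u'(1)²/2 ≤ F(‖u‖_{L^∞}) ≤ M_n u'(1)² < +∞ for a dimensional constant M_n, and consequently ‖u‖_{L^∞(B₁)} < 1. -/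
open Set MeasureTheory Filter Topology

/-!
Put `v = u'` and `F(t) = ∫₀ᵗ f`. Along the equation the energy `E = F(u) + v²/2` satisfies
`E' = -(n-1) v²/r`, so for `0 < c ≤ 1` we get `E(c) = v(1)²/2 + (n-1) ∫_c^1 v²/t`, and the
decay bound `|v(t)| ≤ K t^a`, with `a = -n/2 + √(n-1) + 1 > 0` (this is where `n ≤ 6` enters),
bounds the integral by `K²/(2a)`. Hence `F(u(c))` stays below a fixed multiple `B` of
`u'(1)²`. Since `F(t) → ∞` as `t → 1`, there is a level `t₀ < 1` with `F(t₀) > B`, and the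
energy bound at the last point where `u` reaches `t₀` shows that `u` never does, so
`‖u‖_∞ ≤ t₀ < 1`. Finally `F(‖u‖_∞) = sup F(u)` gives the upper bound, and letting `c → 0`,
where `v(c) → 0`, in `u'(1)²/2 ≤ E(c)` gives the lower one.
-/

theorem le_of_eventually_le_add {α : Type*} {l : Filter α} [l.NeBot] {g : α → ℝ} {x y : ℝ}
    (hg : Tendsto g l (𝓝 0)) (h : ∀ᶠ c in l, x ≤ y + g c) : x ≤ y := by
  simpa using ge_of_tendsto (hg.const_add y) h

noncomputable def primitive (f : ℝ → ℝ) (t : ℝ) : ℝ := ∫ s in (0:ℝ)..t, f s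

section primitive

variable {f : ℝ → ℝ} {b y : ℝ}

@[simp]
theorem primitive_zero : primitive f 0 = 0 :=
  intervalIntegral.integral_same

theorem hasDerivWithinAt_primitive (hf : ContinuousOn f (Icc 0 b)) (hy : y ∈ Icc 0 b) :
    HasDerivWithinAt (primitive f) (f y) (Icc 0 b) y := by
  have : Fact (y ∈ Icc 0 b) := ⟨hy⟩
  refine intervalIntegral.integral_hasDerivWithinAt_right ?_
    (hf.stronglyMeasurableAtFilter_nhdsWithin measurableSet_Icc y) (hf y hy)
  refine (hf.mono ?_).intervalIntegrable
  rw [uIcc_of_le hy.1]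
  exact Icc_subset_Icc_right hy.2

theorem continuousOn_primitive (hf : ContinuousOn f (Icc 0 b)) :
    ContinuousOn (primitive f) (Icc 0 b) := fun _ hy =>
  (hasDerivWithinAt_primitive hf hy).continuousWithinAt

theorem monotoneOn_primitive (hf : ContinuousOn f (Icc 0 b)) (hpos : ∀ t ∈ Icc 0 b, 0 ≤ f t) :
    MonotoneOn (primitive f) (Icc 0 b) := fun y hy z hz hyz =>
  intervalIntegral.integral_mono_interval le_rfl hy.1 hyz
    ((ae_restrict_iff' measurableSet_Ioc).2
      (.of_forall fun t ht => hpos t ⟨ht.1.le, ht.2.trans hz.2⟩))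
    ((hf.mono (by rw [uIcc_of_le hz.1]; exact Icc_subset_Icc_right hz.2)).intervalIntegrable)

theorem primitive_sSup_eq {S : Set ℝ} (hS : S.Nonempty) (hSb : S ⊆ Icc 0 b)
    (hf : ContinuousOn f (Icc 0 b)) (hpos : ∀ t ∈ Icc 0 b, 0 ≤ f t) :
    primitive f (sSup S) = sSup (primitive f '' S) := by
  have hbdd : BddAbove S := ⟨b, fun z hz => (hSb hz).2⟩
  have hsup : sSup S ∈ Icc 0 b :=
    ⟨(hSb hS.some_mem).1.trans (le_csSup hbdd hS.some_mem), csSup_le hS fun z hz => (hSb hz).2⟩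
  exact MonotoneOn.map_csSup_of_continuousWithinAt ((continuousOn_primitive hf _ hsup).mono hSb)
    ((monotoneOn_primitive hf hpos).mono hSb) hS hbdd

theorem le_primitive_sSup_image_le {u g : ℝ → ℝ} {x B : ℝ}
    (hu : MapsTo u (Ioc 0 1) (Icc 0 b)) (hf : ContinuousOn f (Icc 0 b))
    (hpos : ∀ t ∈ Icc 0 b, 0 ≤ f t) (hg : Tendsto g (𝓝[>] 0) (𝓝 0))
    (h : ∀ c ∈ Ioc (0:ℝ) 1, x ≤ primitive f (u c) + g c ∧ primitive f (u c) ≤ B) :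
    x ≤ primitive f (sSup (u '' Ioc 0 1)) ∧ primitive f (sSup (u '' Ioc 0 1)) ≤ B := by
  have hne : (u '' Ioc 0 1).Nonempty := (nonempty_Ioc.2 one_pos).image u
  have hFB : ∀ y ∈ primitive f '' (u '' Ioc 0 1), y ≤ B :=
    forall_mem_image.2 (forall_mem_image.2 fun c hc => (h c hc).2)
  rw [primitive_sSup_eq hne (image_subset_iff.2 hu) hf hpos]
  refine ⟨le_of_eventually_le_add hg ?_, csSup_le (hne.image _) hFB⟩
  filter_upwards [Ioc_mem_nhdsGT zero_lt_one] with c hc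
  exact (h c hc).1.trans
    (add_le_add_left (le_csSup ⟨B, hFB⟩ (mem_image_of_mem _ (mem_image_of_mem u hc))) _)

theorem ofReal_primitive (hf : ContinuousOn f (Icc 0 y)) (hpos : ∀ t ∈ Icc 0 y, 0 ≤ f t)
    (hy : 0 ≤ y) :
    ENNReal.ofReal (primitive f y) = ∫⁻ s in Ioo 0 y, ENNReal.ofReal (f s) := by
  rw [primitive, intervalIntegral.integral_of_le hy, integral_Ioc_eq_integral_Ioo,
    ofReal_integral_eq_lintegral_ofReal]
  · exact hf.integrableOn_Icc.mono_set Ioo_subset_Icc_self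
  · exact (ae_restrict_iff' measurableSet_Ioo).2
      (.of_forall fun t ht => hpos t (Ioo_subset_Icc_self ht))

theorem tendsto_primitive_atTop (hf : ContinuousOn f (Ico 0 1))
    (hpos : ∀ t ∈ Ico 0 1, 0 ≤ f t) (hF1 : ∫⁻ s in Ioo 0 1, ENNReal.ofReal (f s) = ⊤) :
    Tendsto (primitive f) (𝓝[<] 1) atTop := by
  rw [← ENNReal.tendsto_ofReal_nhds_top, ← hF1]
  have hcover : AECover (volume.restrict (Ioo (0:ℝ) 1)) (𝓝[<] 1) (Ioo 0) :=
    aecover_Ioo_of_Ioo tendsto_const_nhds nhdsWithin_le_nhds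
  refine (hcover.lintegral_tendsto_of_countably_generated
    ((hf.mono Ioo_subset_Ico_self).aemeasurable measurableSet_Ioo).ennreal_ofReal).congr' ?_
  filter_upwards [Ico_mem_nhdsLT zero_lt_one] with t ht
  rw [Measure.restrict_restrict measurableSet_Ioo, Ioo_inter_Ioo, max_self, min_eq_left ht.2.le,
    ofReal_primitive (hf.mono (Icc_subset_Ico_right ht.2))
      (fun s hs => hpos s (Icc_subset_Ico_right ht.2 hs)) ht.1]

end primitive

section energy

variable {u v v' F f : ℝ → ℝ} {s : Set ℝ} {k b c e x w : ℝ}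

theorem hasDerivAt_radialEnergy (hu : HasDerivAt u (v x) x) (hv : HasDerivAt v w x)
    (hF : HasDerivWithinAt F (f (u x)) s (u x)) (hs : ∀ᶠ y in 𝓝 x, u y ∈ s)
    (heq : -w - k / x * v x = f (u x)) :
    HasDerivAt (fun r => F (u r) + v r ^ 2 / 2) (-(k * (v x ^ 2 / x))) x := by
  refine ((hF.comp_hasDerivAt x hu hs).add ((hv.pow 2).div_const 2)).congr_deriv ?_
  rw [← heq]
  ring

theorem radialEnergy_eq (hc : 0 < c) (hce : c ≤ e) (hu : ContinuousOn u (Icc c e))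
    (hv : ContinuousOn v (Icc c e)) (hu' : ∀ x ∈ Ioo c e, HasDerivAt u (v x) x)
    (hv' : ∀ x ∈ Ioo c e, HasDerivAt v (v' x) x) (hf : ContinuousOn f (Icc 0 b))
    (hub : MapsTo u (Icc c e) (Icc 0 b)) (heq : ∀ x ∈ Ioo c e, -v' x - k / x * v x = f (u x)) :
    primitive f (u c) + v c ^ 2 / 2 =
      primitive f (u e) + v e ^ 2 / 2 + k * ∫ t in c..e, v t ^ 2 / t := by
  have hderiv : ∀ x ∈ Ioo c e,
      HasDerivAt (fun r => primitive f (u r) + v r ^ 2 / 2) (-(k * (v x ^ 2 / x))) x :=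
    fun x hx => hasDerivAt_radialEnergy (hu' x hx) (hv' x hx)
      (hasDerivWithinAt_primitive hf (hub (Ioo_subset_Icc_self hx)))
      (mem_of_superset (Ioo_mem_nhds hx.1 hx.2) fun y hy => hub (Ioo_subset_Icc_self hy))
      (heq x hx)
  have hint : IntervalIntegrable (fun t => v t ^ 2 / t) volume c e := by
    refine ContinuousOn.intervalIntegrable ?_
    rw [uIcc_of_le hce]
    exact (hv.pow 2).div continuousOn_id fun t ht => (hc.trans_le ht.1).ne'
  have hftc := intervalIntegral.integral_eq_sub_of_hasDerivAt_of_le hce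
    (((continuousOn_primitive hf).comp hu hub).add ((hv.pow 2).div_const 2)) hderiv
    (hint.const_mul k).neg
  rw [intervalIntegral.integral_neg, intervalIntegral.integral_const_mul] at hftc
  simp only [Pi.add_apply, Function.comp_apply, Pi.pow_apply] at hftc
  linarith

end energy

theorem integral_sq_div_le {g : ℝ → ℝ} {K a c : ℝ} (ha : 0 < a) (hc : 0 < c) (hc1 : c ≤ 1)
    (hg : ContinuousOn g (Icc c 1)) (hdecay : ∀ t ∈ Icc c 1, |g t| ≤ K * t ^ a) :
    ∫ t in c..1, g t ^ 2 / t ≤ K ^ 2 / (2 * a) := by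
  have hpos : ∀ t ∈ Icc c 1, 0 < t := fun t ht => hc.trans_le ht.1
  have hpt : ∀ t ∈ Icc c 1, g t ^ 2 / t ≤ K ^ 2 * t ^ (2 * a - 1) := fun t ht => by
    rw [Real.rpow_sub (hpos t ht), Real.rpow_one, mul_comm 2 a, Real.rpow_mul (hpos t ht).le,
      Real.rpow_two, mul_div_assoc', ← mul_pow, ← sq_abs (g t)]
    gcongr
    · exact (hpos t ht).le
    · exact hdecay t ht
  calc ∫ t in c..1, g t ^ 2 / t ≤ ∫ t in c..1, K ^ 2 * t ^ (2 * a - 1) := by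
        refine intervalIntegral.integral_mono_on hc1 ?_ ?_ hpt <;>
          refine ContinuousOn.intervalIntegrable ?_ <;> rw [uIcc_of_le hc1]
        · exact (hg.pow 2).div continuousOn_id fun t ht => (hpos t ht).ne'
        · exact continuousOn_const.mul
            (continuousOn_id.rpow_const fun t ht => Or.inl (hpos t ht).ne')
    _ = K ^ 2 * ((1 - c ^ (2 * a)) / (2 * a)) := by
        rw [intervalIntegral.integral_const_mul, integral_rpow (Or.inl (by linarith)),
          sub_add_cancel, Real.one_rpow]
    _ ≤ K ^ 2 / (2 * a) := by
        rw [mul_div_assoc']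
        gcongr
        exact mul_le_of_le_one_right (sq_nonneg K) (by linarith [Real.rpow_nonneg hc.le (2 * a)])

theorem decayExponent_pos {n : ℝ} (hn : n ≤ 6) : 0 < -n / 2 + √(n - 1) + 1 := by
  rcases lt_or_ge n 2 with h | h
  · linarith [Real.sqrt_nonneg (n - 1)]
  · have : n / 2 - 1 < √(n - 1) := by
      rw [Real.lt_sqrt (by linarith)]
      nlinarith
    linarith

theorem tendsto_zero_of_abs_le_rpow {g : ℝ → ℝ} {K a : ℝ} (ha : 0 < a)
    (hg : ∀ t ∈ Ioc (0:ℝ) 1, |g t| ≤ K * t ^ a) : Tendsto g (𝓝[>] 0) (𝓝 0) := by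
  have hlim : Tendsto (fun t : ℝ => K * t ^ a) (𝓝[>] 0) (𝓝 0) := by
    have := ((Real.continuousAt_rpow_const 0 a (Or.inr ha.le)).const_mul K).tendsto
    rw [Real.zero_rpow ha.ne', mul_zero] at this
    exact this.mono_left nhdsWithin_le_nhds
  refine squeeze_zero_norm' ?_ hlim
  filter_upwards [Ioc_mem_nhdsGT zero_lt_one] with t ht using hg t ht

theorem ContinuousOn.le_of_forall_mem_Ioo_le {g h : ℝ → ℝ} {a b x : ℝ}
    (hg : ContinuousOn g (Ioc a b)) (hh : ContinuousOn h (Ioc a b))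
    (hle : ∀ y ∈ Ioo a b, g y ≤ h y) (hx : x ∈ Ioc a b) : g x ≤ h x := by
  refine ContinuousWithinAt.closure_le ?_ ((hg x hx).mono Ioo_subset_Ioc_self)
    ((hh x hx).mono Ioo_subset_Ioc_self) hle
  rw [closure_Ioo (hx.1.trans_le hx.2).ne]
  exact Ioc_subset_Icc_self hx

theorem ContinuousOn.exists_eq_forall_le_of_le {u : ℝ → ℝ} {r b t : ℝ} (hrb : r ≤ b)
    (hu : ContinuousOn u (Icc r b)) (hr : t ≤ u r) (hb : u b ≤ t) :
    ∃ c ∈ Icc r b, u c = t ∧ ∀ x ∈ Icc c b, u x ≤ t := by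
  have hS : IsCompact (Icc r b ∩ u ⁻¹' Ici t) :=
    isCompact_Icc.of_isClosed_subset (hu.preimage_isClosed_of_isClosed isClosed_Icc isClosed_Ici)
      inter_subset_left
  obtain ⟨c, ⟨hc, hct⟩, hcmax⟩ := hS.exists_isGreatest ⟨r, ⟨le_rfl, hrb⟩, hr⟩
  have hlt : ∀ x ∈ Ioc c b, u x < t := fun x hx =>
    not_le.1 fun h => hx.1.not_ge (hcmax ⟨⟨hc.1.trans hx.1.le, hx.2⟩, h⟩)
  have hle : u c ≤ t := by
    rcases hc.2.eq_or_lt with hcb | hcb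
    · rwa [hcb]
    · refine ContinuousWithinAt.closure_le ?_
        ((hu c hc).mono fun x hx => ⟨hc.1.trans hx.1.le, hx.2⟩) continuousWithinAt_const
        fun x hx => (hlt x hx).le
      rw [closure_Ioc hcb.ne]
      exact left_mem_Icc.2 hcb.le
  refine ⟨c, hc, le_antisymm hle hct, fun x hx => ?_⟩
  rcases hx.1.eq_or_lt with hcx | hcx
  · rwa [← hcx]
  · exact (hlt x ⟨hcx, hx.2⟩).le

theorem ContinuousOn.forall_lt_of_bound_at_level {u G : ℝ → ℝ} {a b t B : ℝ}
    (hu : ContinuousOn u (Ioc a b)) (hb : u b ≤ t)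
    (hG : ∀ c ∈ Ioc a b, (∀ x ∈ Icc c b, u x ≤ t) → G (u c) ≤ B) (hB : B < G t) :
    ∀ r ∈ Ioc a b, u r < t := by
  intro r hr
  by_contra! h
  obtain ⟨c, hc, huc, hle⟩ :=
    (hu.mono (Icc_subset_Ioc hr.1 le_rfl)).exists_eq_forall_le_of_le hr.2 h hb
  have := hG c ⟨hr.1.trans_le hc.1, hc.2⟩ hle
  rw [huc] at this
  linarith

theorem sq_deriv_le_sq_derivWithin {u : ℝ → ℝ} {s : Set ℝ} {x : ℝ}
    (hs : UniqueDiffWithinAt ℝ s x) : deriv u x ^ 2 ≤ derivWithin u s x ^ 2 := by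
  by_cases h : DifferentiableAt ℝ u x
  · rw [h.derivWithin hs]
  · rw [deriv_zero_of_not_differentiableAt h, sq, zero_mul]
    positivity

theorem ContDiffOn.hasDerivAt_derivWithin {u : ℝ → ℝ} {s : Set ℝ} {x : ℝ}
    (hu : ContDiffOn ℝ 2 u s) (hx : s ∈ 𝓝 x) :
    HasDerivAt (derivWithin u s) (deriv (deriv u) x) x := by
  have hloc : derivWithin u s =ᶠ[𝓝 x] deriv u :=
    (eventually_mem_nhds_iff.2 hx).mono fun y hy => derivWithin_of_mem_nhds hy
  have hdiff : DifferentiableAt ℝ (deriv u) x :=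
    (((hu.mono interior_subset).deriv_of_isOpen (m := 1) isOpen_interior
      (by norm_num)).differentiableOn one_ne_zero).differentiableAt (interior_mem_nhds.2 hx)
  exact hdiff.hasDerivAt.congr_of_eventuallyEq hloc

theorem abs_derivWithin_Ioc_le {u : ℝ → ℝ} {K a : ℝ} (hu : ContDiffOn ℝ 1 u (Ioc 0 1))
    (h : ∀ t ∈ Ioo (0:ℝ) 1, |deriv u t| ≤ K * t ^ a) :
    ∀ t ∈ Ioc (0:ℝ) 1, |derivWithin u (Ioc 0 1) t| ≤ K * t ^ a := fun _ ht =>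
  (hu.continuousOn_derivWithin (uniqueDiffOn_Ioc 0 1) le_rfl).abs.le_of_forall_mem_Ioo_le
    (continuousOn_const.mul (continuousOn_id.rpow_const fun x hx => Or.inl hx.1.ne'))
    (fun y hy => by
      rw [derivWithin_of_mem_nhds (Ioc_mem_nhds hy.1 hy.2)]
      exact h y hy) ht

theorem radialEnergy_bounds {u f : ℝ → ℝ} {k K a b c : ℝ}
    (hu : ContDiffOn ℝ 2 u (Ioc 0 1)) (hu1 : u 1 = 0) (hu0 : ∀ r ∈ Ioc (0:ℝ) 1, 0 ≤ u r)
    (hf : ContinuousOn f (Icc 0 b))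
    (heq : ∀ r ∈ Ioo (0:ℝ) 1, -(deriv (deriv u) r) - k / r * deriv u r = f (u r))
    (hk : 0 ≤ k) (ha : 0 < a)
    (hdecay : ∀ t ∈ Ioc (0:ℝ) 1, |derivWithin u (Ioc 0 1) t| ≤ K * t ^ a)
    (hc : c ∈ Ioc (0:ℝ) 1) (hub : ∀ x ∈ Icc c 1, u x ≤ b) :
    deriv u 1 ^ 2 / 2 ≤ primitive f (u c) + derivWithin u (Ioc 0 1) c ^ 2 / 2 ∧
      primitive f (u c) ≤ (1 / 2 + k / (2 * a)) * K ^ 2 := by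
  set v := derivWithin u (Ioc 0 1)
  have hIcc : Icc c 1 ⊆ Ioc 0 1 := fun x hx => ⟨hc.1.trans_le hx.1, hx.2⟩
  have hIoo : ∀ x ∈ Ioo c 1, Ioc (0:ℝ) 1 ∈ 𝓝 x := fun x hx =>
    Ioc_mem_nhds (hc.1.trans hx.1) hx.2
  have hv : ContinuousOn v (Ioc 0 1) :=
    hu.continuousOn_derivWithin (uniqueDiffOn_Ioc 0 1) (by norm_num)
  have hE := radialEnergy_eq (k := k) hc.1 hc.2 (hu.continuousOn.mono hIcc) (hv.mono hIcc)
    (fun x hx => ((hu.differentiableOn (by norm_num) x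
      (hIcc (Ioo_subset_Icc_self hx))).hasDerivWithinAt.hasDerivAt (hIoo x hx)))
    (fun x hx => hu.hasDerivAt_derivWithin (hIoo x hx)) hf
    (fun x hx => ⟨hu0 x (hIcc hx), hub x hx⟩)
    (fun x hx => by
      have h := heq x ⟨hc.1.trans hx.1, hx.2⟩
      rwa [← derivWithin_of_mem_nhds (f := u) (hIoo x hx)] at h)
  rw [hu1, primitive_zero] at hE
  have hI0 : 0 ≤ ∫ t in c..1, v t ^ 2 / t :=
    intervalIntegral.integral_nonneg hc.2 fun t ht =>
      div_nonneg (sq_nonneg _) (hc.1.trans_le ht.1).le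
  have hI : ∫ t in c..1, v t ^ 2 / t ≤ K ^ 2 / (2 * a) :=
    integral_sq_div_le ha hc.1 hc.2 (hv.mono hIcc) fun t ht => hdecay t (hIcc ht)
  -- `deriv u 1` is two-sided: it is either `v 1` or the junk value `0`.
  have hd : deriv u 1 ^ 2 ≤ v 1 ^ 2 :=
    sq_deriv_le_sq_derivWithin (uniqueDiffOn_Ioc 0 1 1 ⟨one_pos, le_rfl⟩)
  have hv1 : v 1 ^ 2 ≤ K ^ 2 := by
    have h := hdecay 1 ⟨one_pos, le_rfl⟩
    rw [Real.one_rpow, mul_one] at h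
    simpa only [sq_abs] using pow_le_pow_left₀ (abs_nonneg _) h 2
  have hB : (1 / 2 + k / (2 * a)) * K ^ 2 = K ^ 2 / 2 + k * (K ^ 2 / (2 * a)) := by ring
  constructor
  · nlinarith [mul_nonneg hk hI0]
  · nlinarith [mul_le_mul_of_nonneg_left hI hk, sq_nonneg (v c)]

/-- Let `2 ≤ n ≤ 6` and let `u` be a C² radial solution of
`-u'' - (n-1)/r u' = f(u)` on `(0,1)` with `u(1)=0`, `0 ≤ u ≤ 1`, `f ≥ 0` C¹,
`F(1) = ∫₀¹ f = +∞`, satisfying the decay bound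
`|u'(t)| ≤ Cₙ|u'(1)| t^(-n/2+√(n-1)+1)` on `(0,1]`. Then
`u'(1)²/2 ≤ F(‖u‖_∞) ≤ Mₙ u'(1)² < +∞` for a dimensional constant `Mₙ`, and
consequently `‖u‖_{L^∞} = sSup (u '' (0,1]) < 1`. -/
theorem stmt_16 (n : ℕ) (hn2 : 2 ≤ n) (hn6 : n ≤ 6) (u f : ℝ → ℝ) (Cn : ℝ)
    (hu : ContDiffOn ℝ 2 u (Set.Ioc 0 1)) (hu1 : u 1 = 0)
    (hub : ∀ r ∈ Set.Ioc (0:ℝ) 1, 0 ≤ u r ∧ u r ≤ 1)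
    (hf : ContDiffOn ℝ 1 f (Set.Ico 0 1))
    (hfpos : ∀ t ∈ Set.Ico (0:ℝ) 1, 0 ≤ f t)
    (hF1 : ∫⁻ s in Set.Ioo (0:ℝ) 1, ENNReal.ofReal (f s) = ⊤)
    (heq : ∀ r ∈ Set.Ioo (0:ℝ) 1,
      -(deriv (deriv u) r) - ((n:ℝ) - 1) / r * deriv u r = f (u r))
    (hdecay : ∀ t ∈ Set.Ioc (0:ℝ) 1,
      |deriv u t| ≤ Cn * |deriv u 1| *
        t ^ (-(n:ℝ)/2 + Real.sqrt ((n:ℝ) - 1) + 1)) :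
    (∃ Mn : ℝ,
      (deriv u 1) ^ 2 / 2 ≤ (∫ s in (0:ℝ)..(sSup (u '' Set.Ioc 0 1)), f s) ∧
      (∫ s in (0:ℝ)..(sSup (u '' Set.Ioc 0 1)), f s) ≤ Mn * (deriv u 1) ^ 2) ∧
    sSup (u '' Set.Ioc 0 1) < 1 := by
  set a := -(n:ℝ) / 2 + √((n:ℝ) - 1) + 1
  set B := (1 / 2 + ((n:ℝ) - 1) / (2 * a)) * (Cn * |deriv u 1|) ^ 2
  have ha : 0 < a := decayExponent_pos (by exact_mod_cast hn6)
  have hk : (0:ℝ) ≤ n - 1 := sub_nonneg.2 (Nat.one_le_cast.2 (by omega))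
  have hvdecay := abs_derivWithin_Ioc_le (hu.of_le one_le_two) fun t ht =>
    hdecay t (Ioo_subset_Ioc_self ht)
  obtain ⟨t₀, hBt₀, ht₀0, ht₀1⟩ : ∃ t, B < primitive f t ∧ 0 ≤ t ∧ t < 1 :=
    (((tendsto_primitive_atTop hf.continuousOn hfpos hF1).eventually_gt_atTop B).and
      (Ico_mem_nhdsLT zero_lt_one)).exists
  have hf₀ : ContinuousOn f (Icc 0 t₀) := hf.continuousOn.mono (Icc_subset_Ico_right ht₀1)
  have hE := fun (c : ℝ) (hc : c ∈ Ioc (0:ℝ) 1) (hle : ∀ x ∈ Icc c 1, u x ≤ t₀) =>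
    radialEnergy_bounds hu hu1 (fun r hr => (hub r hr).1) hf₀ heq hk ha hvdecay hc hle
  have hlt : ∀ r ∈ Ioc (0:ℝ) 1, u r < t₀ := hu.continuousOn.forall_lt_of_bound_at_level
    (hu1.trans_le ht₀0) (fun c hc hle => (hE c hc hle).2) hBt₀
  obtain ⟨hlow, hup⟩ :=
    le_primitive_sSup_image_le (fun r hr => ⟨(hub r hr).1, (hlt r hr).le⟩) hf₀
      (fun t ht => hfpos t ⟨ht.1, ht.2.trans_lt ht₀1⟩)
      (by simpa using ((tendsto_zero_of_abs_le_rpow ha hvdecay).pow 2).div_const 2)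
      fun c hc => hE c hc fun x hx => (hlt x ⟨hc.1.trans_le hx.1, hx.2⟩).le
  refine ⟨⟨(1 / 2 + ((n:ℝ) - 1) / (2 * a)) * Cn ^ 2, hlow, hup.trans_eq ?_⟩,
    (csSup_le ((nonempty_Ioc.2 one_pos).image u)
      (forall_mem_image.2 fun r hr => (hlt r hr).le)).trans_lt ht₀1⟩
  rw [mul_pow, sq_abs, mul_assoc]
end
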